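/- arXiv:1209.6243 — 3 statements merged into one kernel-verified Lean document; each statement's English description precedes it below -/
import Mathlib

section
/- Let A be a ring with a nilpotent two-sided ideal a such that the associated graded ring gr_a(A) is commutative, and let s ∈ A. Then the multiplicative set {s^j : j ≥ 0} is a denominator set in A: it satisfies the left and right Ore conditions and the left and right reversibility conditions; consequently the Ore ring of fractions A_s of A with respect to {s^j : j ≥ 0} exists. -/
universe u

/-- The powers of a subset `S` of a ring: `S^0 = ⊤` (everything), and `S^{n+1}` is the
additive subgroup generated by products `y·z` with `y ∈ S^n` and `z ∈ S`.  For `S` the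
underlying set of a two-sided ideal `𝔞`, this is the usual power `𝔞^n` (as an additive
subgroup). -/
def setPow {A : Type u} [Ring A] (S : Set A) : ℕ → AddSubgroup A
  | 0 => ⊤
  | n + 1 => AddSubgroup.closure {w | ∃ y ∈ setPow S n, ∃ z ∈ S, w = y * z}

/-- Let `A` be a ring with a nilpotent two-sided ideal `𝔞` such that the
associated graded ring `gr_𝔞(A)` is commutative (i.e. `xy - yx ∈ 𝔞^{i+j+1}` whenever
`x ∈ 𝔞^i`, `y ∈ 𝔞^j`), and let `s ∈ A`.  Then the multiplicative set `{s^j : j ≥ 0}` is a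
denominator set in `A`: it satisfies the left and right Ore conditions and the left and
right reversibility conditions; consequently the Ore ring of fractions `A_s` exists,
i.e. there is an Ore-set structure on the submonoid of powers of `s`. -/
theorem stmt_1 {A : Type u} [Ring A] (a : TwoSidedIdeal A)
    (hnil : ∃ n : ℕ, setPow (a : Set A) n = ⊥)
    (hgr : ∀ (i j : ℕ) (x y : A), x ∈ setPow (a : Set A) i → y ∈ setPow (a : Set A) j →
      x * y - y * x ∈ setPow (a : Set A) (i + j + 1))
    (s : A) :
    -- left Ore condition
    (∀ (r : A) (j : ℕ), ∃ (r' : A) (k : ℕ), s ^ k * r = r' * s ^ j) ∧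
    -- right Ore condition
    (∀ (r : A) (j : ℕ), ∃ (r' : A) (k : ℕ), r * s ^ k = s ^ j * r') ∧
    -- left reversibility
    (∀ (r₁ r₂ : A) (j : ℕ), s ^ j * r₁ = s ^ j * r₂ → ∃ k : ℕ, r₁ * s ^ k = r₂ * s ^ k) ∧
    -- right reversibility
    (∀ (r₁ r₂ : A) (j : ℕ), r₁ * s ^ j = r₂ * s ^ j → ∃ k : ℕ, s ^ k * r₁ = s ^ k * r₂) ∧
    -- consequently, the Ore localization of `A` at the powers of `s` exists
    Nonempty (OreLocalization.OreSet (Submonoid.powers s)) := by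
  classical
  obtain ⟨n, hn⟩ := hnil
  set P : ℕ → AddSubgroup A := fun m => setPow (a : Set A) m with hPdef
  -- P is closed under left multiplication by arbitrary elements
  have hmulL : ∀ (m : ℕ) (x r : A), r ∈ P m → x * r ∈ P m := by
    intro m
    induction m with
    | zero => intro x r _; trivial
    | succ m ih =>
      intro x r hr
      induction hr using AddSubgroup.closure_induction with
      | mem w hw =>
        obtain ⟨y, hy, z, hz, rfl⟩ := hw
        rw [← mul_assoc]
        exact AddSubgroup.subset_closure ⟨x * y, ih x y hy, z, hz, rfl⟩
      | zero => simpa using zero_mem _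
      | add u v _ _ hu hv => rw [mul_add]; exact add_mem hu hv
      | neg u _ hu => rw [mul_neg]; exact neg_mem hu
  -- P is closed under right multiplication by arbitrary elements
  have hmulR : ∀ (m : ℕ) (x r : A), r ∈ P m → r * x ∈ P m := by
    intro m
    match m with
    | 0 => intro x r _; trivial
    | Nat.succ m =>
      intro x r hr
      induction hr using AddSubgroup.closure_induction with
      | mem w hw =>
        obtain ⟨y, hy, z, hz, rfl⟩ := hw
        rw [mul_assoc]
        exact AddSubgroup.subset_closure ⟨y, hy, z * x, a.mul_mem_right _ _ hz, rfl⟩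
      | zero => simpa using zero_mem _
      | add u v _ _ hu hv => rw [add_mul]; exact add_mem hu hv
      | neg u _ hu => rw [neg_mul]; exact neg_mem hu
  -- P is antitone
  have hanti : ∀ m : ℕ, P (m + 1) ≤ P m := by
    intro m
    induction m with
    | zero => exact le_top
    | succ m ih =>
      refine AddSubgroup.closure_le _ |>.mpr ?_
      rintro w ⟨y, hy, z, hz, rfl⟩
      exact AddSubgroup.subset_closure ⟨y, ih hy, z, hz, rfl⟩
  have hle : ∀ {m m' : ℕ}, m ≤ m' → P m' ≤ P m := by
    intro m m' h
    induction h with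
    | refl => exact le_rfl
    | step h ih => exact le_trans (hanti _) ih
  have hbot : ∀ {m : ℕ}, n ≤ m → ∀ {r : A}, r ∈ P m → r = 0 := by
    intro m hm r hr
    have : r ∈ P n := hle hm hr
    rw [hPdef] at this
    simp only at this
    rw [hn] at this
    simpa using this
  -- Left Ore, strengthened
  have ld : ∀ (t m : ℕ), n ≤ m + t → ∀ r ∈ P m, ∀ j : ℕ,
      ∃ r' ∈ P m, ∃ k : ℕ, s ^ k * r = r' * s ^ j := by
    intro t
    induction t with
    | zero =>
      intro m hm r hr j
      exact ⟨0, zero_mem _, 0, by simp [hbot (by omega) hr]⟩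
    | succ t ih =>
      intro m hm r hr j
      induction j with
      | zero => exact ⟨r, hr, 0, by simp⟩
      | succ j ihj =>
        obtain ⟨r', hr', k, hk⟩ := ihj
        have hc : s * r' - r' * s ∈ P (m + 1) := by
          have := hgr 0 m s r' trivial hr'
          simpa using this
        obtain ⟨c', hc', k₂, hk₂⟩ := ih (m + 1) (by omega) _ hc 1
        refine ⟨s ^ k₂ * r' + c', add_mem (hmulL _ _ _ hr') (hanti _ hc'), k₂ + k + 1, ?_⟩
        have hpow : s ^ (k₂ + k + 1) = s ^ k₂ * s * s ^ k := by
          rw [show k₂ + k + 1 = k₂ + 1 + k by omega, pow_add, pow_add, pow_one]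
        rw [pow_one] at hk₂
        calc s ^ (k₂ + k + 1) * r = s ^ k₂ * (s * (s ^ k * r)) := by
              rw [hpow]; noncomm_ring
          _ = s ^ k₂ * (s * (r' * s ^ j)) := by rw [hk]
          _ = (s ^ k₂ * r') * (s * s ^ j) + (s ^ k₂ * (s * r' - r' * s)) * s ^ j := by
              noncomm_ring
          _ = (s ^ k₂ * r') * (s * s ^ j) + (c' * s) * s ^ j := by rw [hk₂]
          _ = (s ^ k₂ * r' + c') * s ^ (j + 1) := by rw [pow_succ']; noncomm_ring
  -- Right Ore, strengthened
  have rd : ∀ (t m : ℕ), n ≤ m + t → ∀ r ∈ P m, ∀ j : ℕ,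
      ∃ r' ∈ P m, ∃ k : ℕ, r * s ^ k = s ^ j * r' := by
    intro t
    induction t with
    | zero =>
      intro m hm r hr j
      exact ⟨0, zero_mem _, 0, by simp [hbot (by omega) hr]⟩
    | succ t ih =>
      intro m hm r hr j
      induction j with
      | zero => exact ⟨r, hr, 0, by simp⟩
      | succ j ihj =>
        obtain ⟨r', hr', k, hk⟩ := ihj
        have hc : s * r' - r' * s ∈ P (m + 1) := by
          have := hgr 0 m s r' trivial hr'
          simpa using this
        obtain ⟨c', hc', k₂, hk₂⟩ := ih (m + 1) (by omega) _ hc 1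
        refine ⟨r' * s ^ k₂ - c', sub_mem (hmulR _ _ _ hr') (hanti _ hc'), k + 1 + k₂, ?_⟩
        have hpow : s ^ (k + 1 + k₂) = s ^ k * s * s ^ k₂ := by
          rw [pow_add, pow_add, pow_one]
        rw [pow_one] at hk₂
        calc r * s ^ (k + 1 + k₂) = ((r * s ^ k) * s) * s ^ k₂ := by rw [hpow]; noncomm_ring
          _ = ((s ^ j * r') * s) * s ^ k₂ := by rw [hk]
          _ = s ^ j * ((s * r') * s ^ k₂) - s ^ j * ((s * r' - r' * s) * s ^ k₂) := by
              noncomm_ring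
          _ = s ^ j * ((s * r') * s ^ k₂) - s ^ j * (s * c') := by rw [hk₂]
          _ = (s ^ j * s) * (r' * s ^ k₂ - c') := by noncomm_ring
          _ = s ^ (j + 1) * (r' * s ^ k₂ - c') := by rw [pow_succ]
  -- left-to-right cancellation
  have lrev : ∀ (t m : ℕ), n ≤ m + t → ∀ d ∈ P m, ∀ j : ℕ,
      s ^ j * d = 0 → ∃ k : ℕ, d * s ^ k = 0 := by
    intro t
    induction t with
    | zero =>
      intro m hm d hd j _
      exact ⟨0, by simp [hbot (by omega) hd]⟩
    | succ t ih =>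
      intro m hm d hd j h
      have hc : s ^ j * d - d * s ^ j ∈ P (m + 1) := by
        have := hgr 0 m (s ^ j) d trivial hd
        simpa using this
      have hc0 : s ^ j * (s ^ j * d - d * s ^ j) = 0 := by
        calc s ^ j * (s ^ j * d - d * s ^ j)
            = s ^ j * (s ^ j * d) - (s ^ j * d) * s ^ j := by noncomm_ring
          _ = 0 := by rw [h]; noncomm_ring
      obtain ⟨k, hk⟩ := ih (m + 1) (by omega) _ hc j hc0
      refine ⟨j + k, ?_⟩
      calc d * s ^ (j + k) = (d * s ^ j) * s ^ k := by rw [pow_add, mul_assoc]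
        _ = (s ^ j * d) * s ^ k - (s ^ j * d - d * s ^ j) * s ^ k := by noncomm_ring
        _ = 0 := by rw [hk, h]; simp
  -- right-to-left cancellation
  have rrev : ∀ (t m : ℕ), n ≤ m + t → ∀ d ∈ P m, ∀ j : ℕ,
      d * s ^ j = 0 → ∃ k : ℕ, s ^ k * d = 0 := by
    intro t
    induction t with
    | zero =>
      intro m hm d hd j _
      exact ⟨0, by simp [hbot (by omega) hd]⟩
    | succ t ih =>
      intro m hm d hd j h
      have hc : s ^ j * d - d * s ^ j ∈ P (m + 1) := by
        have := hgr 0 m (s ^ j) d trivial hd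
        simpa using this
      have hc0 : (s ^ j * d - d * s ^ j) * s ^ j = 0 := by
        calc (s ^ j * d - d * s ^ j) * s ^ j
            = s ^ j * ((d * s ^ j)) - (d * s ^ j) * s ^ j := by noncomm_ring
          _ = 0 := by rw [h]; noncomm_ring
      obtain ⟨k, hk⟩ := ih (m + 1) (by omega) _ hc j hc0
      refine ⟨k + j, ?_⟩
      calc s ^ (k + j) * d = s ^ k * (s ^ j * d) := by rw [pow_add, mul_assoc]
        _ = s ^ k * (s ^ j * d - d * s ^ j) + s ^ k * (d * s ^ j) := by noncomm_ring
        _ = 0 := by rw [hk, h]; simp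
  have leftOre : ∀ (r : A) (j : ℕ), ∃ (r' : A) (k : ℕ), s ^ k * r = r' * s ^ j := by
    intro r j
    obtain ⟨r', _, k, hk⟩ := ld n 0 (by omega) r trivial j
    exact ⟨r', k, hk⟩
  have rightOre : ∀ (r : A) (j : ℕ), ∃ (r' : A) (k : ℕ), r * s ^ k = s ^ j * r' := by
    intro r j
    obtain ⟨r', _, k, hk⟩ := rd n 0 (by omega) r trivial j
    exact ⟨r', k, hk⟩
  have leftRev : ∀ (r₁ r₂ : A) (j : ℕ), s ^ j * r₁ = s ^ j * r₂ →
      ∃ k : ℕ, r₁ * s ^ k = r₂ * s ^ k := by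
    intro r₁ r₂ j h
    have h0 : s ^ j * (r₁ - r₂) = 0 := by rw [mul_sub, h]; noncomm_ring
    obtain ⟨k, hk⟩ := lrev n 0 (by omega) (r₁ - r₂) trivial j h0
    refine ⟨k, ?_⟩
    rw [sub_mul, sub_eq_zero] at hk
    exact hk
  have rightRev : ∀ (r₁ r₂ : A) (j : ℕ), r₁ * s ^ j = r₂ * s ^ j →
      ∃ k : ℕ, s ^ k * r₁ = s ^ k * r₂ := by
    intro r₁ r₂ j h
    have h0 : (r₁ - r₂) * s ^ j = 0 := by rw [sub_mul, h]; noncomm_ring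
    obtain ⟨k, hk⟩ := rrev n 0 (by omega) (r₁ - r₂) trivial j h0
    refine ⟨k, ?_⟩
    rw [mul_sub, sub_eq_zero] at hk
    exact hk
  refine ⟨leftOre, rightOre, leftRev, rightRev, ?_⟩
  have oreCond : ∀ (r : A) (t : Submonoid.powers s),
      ∃ (r' : A) (t' : Submonoid.powers s), (t' : A) * r = r' * (t : A) := by
    rintro r ⟨tv, j, rfl⟩
    obtain ⟨r', k, hk⟩ := leftOre r j
    exact ⟨r', ⟨s ^ k, k, rfl⟩, hk⟩
  refine ⟨{
    ore_right_cancel := ?_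
    oreNum := fun r t => (oreCond r t).choose
    oreDenom := fun r t => (oreCond r t).choose_spec.choose
    ore_eq := fun r t => (oreCond r t).choose_spec.choose_spec }⟩
  rintro r₁ r₂ ⟨tv, j, rfl⟩ h
  obtain ⟨k, hk⟩ := rightRev r₁ r₂ j h
  exact ⟨⟨s ^ k, k, rfl⟩, hk⟩
end

section
/- Let A be a ring with a nilpotent two-sided ideal a such that gr_a(A) is commutative, let s ∈ A, and let A_s be the Ore ring of fractions of A with respect to the denominator set {s^j : j ≥ 0}. Let Ā := A/a, let s̄ ∈ Ā be the image of s, and let a_s be the kernel of the canonical surjective ring homomorphism A_s → Ā_{s̄}, where Ā_{s̄} is the localization of the commutative ring Ā at s̄. Then a_s = a·A_s = A_s·a, and moreover (a_s)^i = a^i·A_s for every i ≥ 1; in particular a_s is a nilpotent two-sided ideal of A_s. -/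
universe u

section CanonicalMap

variable {A : Type u} [Ring A] (s : A) [OreLocalization.OreSet (Submonoid.powers s)]
variable (B : Type u) [CommRing B] (π : A →+* B)

/-- Each power of `s` maps to a unit of the (commutative) localization
`B̄_{s̄} = B[(π s)⁻¹]`. -/
noncomputable def powersToUnits :
    (Submonoid.powers s) →* (Localization (Submonoid.powers (π s)))ˣ where
  toFun t :=
    (IsLocalization.map_units (M := Submonoid.powers (π s))
      (Localization (Submonoid.powers (π s)))
      ⟨π t, by
        obtain ⟨n, hn⟩ := t.2
        exact ⟨n, by rw [← hn, map_pow]⟩⟩).unit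
  map_one' := Units.ext (by simp)
  map_mul' x y := Units.ext (by simp)

/-- The canonical ring homomorphism `A_s → B̄_{s̄}` from the Ore localization of `A` at
the powers of `s` to the localization of `B̄ = A/𝔞` at the image of `s`; it is induced
by `π : A → B̄` via the universal property of the Ore localization. -/
noncomputable def canonicalToLoc :
    OreLocalization (Submonoid.powers s) A →+* Localization (Submonoid.powers (π s)) :=
  OreLocalization.universalHom
    ((algebraMap B (Localization (Submonoid.powers (π s)))).comp π)
    (powersToUnits s B π)
    (fun t => by simp [powersToUnits])

end CanonicalMap

/- ### Auxiliary lemmas -/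

/-- Push membership in an additive-subgroup closure through an additive hom. -/
lemma closure_map_le_aux {G H : Type*} [AddGroup G] [AddGroup H] (f : G →+ H) (S : Set G)
    (T : AddSubgroup H) (h : ∀ x ∈ S, f x ∈ T) :
    ∀ x ∈ AddSubgroup.closure S, f x ∈ T := by
  intro x hx
  have : (AddSubgroup.closure S).map f ≤ T := by
    rw [AddMonoidHom.map_closure, AddSubgroup.closure_le]
    rintro _ ⟨y, hy, rfl⟩; exact h y hy
  exact this (AddSubgroup.mem_map_of_mem f hx)

section SetPowLemmas

variable {A : Type u} [Ring A] (a : TwoSidedIdeal A)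

lemma setPow_mul_right : ∀ (n : ℕ) (r : A), ∀ x ∈ setPow (a : Set A) n,
    x * r ∈ setPow (a : Set A) n := by
  intro n
  cases n with
  | zero => intro r x _; trivial
  | succ n =>
    intro r x hx
    rw [setPow] at hx ⊢
    refine closure_map_le_aux (AddMonoidHom.mulRight r) _ _ ?_ x hx
    rintro w ⟨y, hy, z, hz, rfl⟩
    exact AddSubgroup.subset_closure
      ⟨y, hy, z * r, a.mul_mem_right _ _ hz, by simp [mul_assoc]⟩

lemma setPow_mul_left : ∀ (n : ℕ) (r : A), ∀ x ∈ setPow (a : Set A) n,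
    r * x ∈ setPow (a : Set A) n := by
  intro n
  induction n with
  | zero => intro r x _; trivial
  | succ n ih =>
    intro r x hx
    rw [setPow] at hx ⊢
    refine closure_map_le_aux (AddMonoidHom.mulLeft r) _ _ ?_ x hx
    rintro w ⟨y, hy, z, hz, rfl⟩
    exact AddSubgroup.subset_closure
      ⟨r * y, ih r y hy, z, hz, by simp [mul_assoc]⟩

lemma setPow_succ_le (n : ℕ) : setPow (a : Set A) (n + 1) ≤ setPow (a : Set A) n := by
  rw [setPow, AddSubgroup.closure_le]
  rintro w ⟨y, hy, z, _, rfl⟩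
  exact setPow_mul_right a n z y hy

lemma setPow_le_of_le {n m : ℕ} (h : n ≤ m) :
    setPow (a : Set A) m ≤ setPow (a : Set A) n := by
  induction m with
  | zero => cases Nat.le_zero.mp h; exact le_rfl
  | succ m ih =>
    rcases Nat.lt_or_ge n (m + 1) with h' | h'
    · exact (setPow_succ_le a m).trans (ih (Nat.lt_succ_iff.mp h'))
    · cases le_antisymm h h'; exact le_rfl

/-- The underlying additive subgroup of a two-sided ideal. -/
def tsiAdd : AddSubgroup A where
  carrier := a
  zero_mem' := a.zero_mem
  add_mem' := a.add_mem
  neg_mem' := a.neg_mem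

lemma mem_tsiAdd {x : A} : x ∈ tsiAdd a ↔ x ∈ a := Iff.rfl

lemma mem_setPow_one {x : A} : x ∈ setPow (a : Set A) 1 ↔ x ∈ a := by
  constructor
  · intro hx
    rw [setPow] at hx
    refine closure_map_le_aux (AddMonoidHom.id A) _ (tsiAdd a) ?_ x hx
    rintro w ⟨y, _, z, hz, rfl⟩
    exact a.mul_mem_left _ _ hz
  · intro hx
    rw [setPow]
    exact AddSubgroup.subset_closure ⟨1, trivial, x, hx, (one_mul x).symm⟩

end SetPowLemmas

section Main

variable {A : Type u} [Ring A] (a : TwoSidedIdeal A)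
variable (s : A) [OreLocalization.OreSet (Submonoid.powers s)]

local notation "As" => OreLocalization (Submonoid.powers s) A
local notation "ν" => (OreLocalization.numeratorRingHom : A →+* OreLocalization (Submonoid.powers s) A)

/-- `𝔞^i · A_s` as an additive subgroup of the Ore localization. -/
def Pgrp (i : ℕ) : AddSubgroup (OreLocalization (Submonoid.powers s) A) :=
  AddSubgroup.closure {w | ∃ y ∈ setPow (a : Set A) i,
    ∃ u : OreLocalization (Submonoid.powers s) A, w = ν y * u}

lemma nrh_apply (r : A) : (ν r : As) = r /ₒ (1 : Submonoid.powers s) := rfl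

lemma num_mul_inv (t : Submonoid.powers s) : (ν (t : A) : As) * ((1 : A) /ₒ t) = 1 := by
  have := OreLocalization.mul_inv (R := A) (S := Submonoid.powers s) t 1
  simpa using this

lemma inv_mul_num (t : Submonoid.powers s) : ((1 : A) /ₒ t) * (ν (t : A) : As) = 1 := by
  have := OreLocalization.mul_inv (R := A) (S := Submonoid.powers s) 1 t
  simpa using this

lemma oreDiv_decomp (r : A) (t : Submonoid.powers s) :
    (r /ₒ t : As) = ((1 : A) /ₒ t) * ν r := by
  rw [nrh_apply, OreLocalization.one_div_mul, one_mul]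

lemma oreDiv_expand (r : A) (t : Submonoid.powers s) (k : ℕ) :
    (r /ₒ t : As) = (s ^ k * r) /ₒ (⟨s ^ k, k, rfl⟩ * t) := by
  have h := OreLocalization.expand r t (s ^ k) (Submonoid.mul_mem _ ⟨k, rfl⟩ t.2)
  rw [h]; rfl

lemma Pgrp_mul_right (i : ℕ) (v : As) : ∀ x ∈ Pgrp a s i, x * v ∈ Pgrp a s i := by
  refine closure_map_le_aux (AddMonoidHom.mulRight v) _ _ ?_
  rintro w ⟨y, hy, u, rfl⟩
  exact AddSubgroup.subset_closure ⟨y, hy, u * v, by simp [mul_assoc]⟩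

lemma Pgrp_le_succ (i : ℕ) : Pgrp a s (i + 1) ≤ Pgrp a s i := by
  rw [Pgrp, AddSubgroup.closure_le]
  rintro w ⟨y, hy, u, rfl⟩
  exact AddSubgroup.subset_closure ⟨y, setPow_succ_le a i hy, u, rfl⟩

lemma Pgrp_num_mul_left (i : ℕ) (r : A) : ∀ x ∈ Pgrp a s i, (ν r : As) * x ∈ Pgrp a s i := by
  refine closure_map_le_aux (AddMonoidHom.mulLeft (ν r : As)) _ _ ?_
  rintro w ⟨y, hy, u, rfl⟩
  exact AddSubgroup.subset_closure
    ⟨r * y, setPow_mul_left a i r y hy, u, by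
      simp only [AddMonoidHom.coe_mulLeft, map_mul, mul_assoc]⟩

/-- A ring identity: if `u` is a two-sided inverse of `T` and `Y T = T Y - D`, then
`u Y = Y u - u D u`. -/
lemma inv_comm_aux {R : Type*} [Ring R] (u T Y D : R) (h1 : T * u = 1) (h2 : u * T = 1)
    (h3 : Y * T = T * Y - D) : u * Y = Y * u - u * D * u := by
  have h4 : u * Y = u * (Y * T) * u := by
    rw [← mul_assoc, mul_assoc (u * Y) T u, h1, mul_one]
  rw [h4, h3, mul_sub, sub_mul, ← mul_assoc u T Y, h2, one_mul]

variable (hgr : ∀ (i j : ℕ) (x y : A), x ∈ setPow (a : Set A) i → y ∈ setPow (a : Set A) j →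
      x * y - y * x ∈ setPow (a : Set A) (i + j + 1))

include hgr in
/-- Key lemma: denominators can be moved to the right past elements of `𝔞^i`. -/
lemma keyP : ∀ (k i : ℕ), setPow (a : Set A) (i + k) = ⊥ →
    ∀ y ∈ setPow (a : Set A) i, ∀ t : Submonoid.powers s,
    ((1 : A) /ₒ t) * (ν y : As) ∈ Pgrp a s i := by
  intro k
  induction k with
  | zero =>
    intro i h0 y hy t
    rw [Nat.add_zero] at h0
    rw [h0, AddSubgroup.mem_bot] at hy
    subst hy
    simpa using (Pgrp a s i).zero_mem
  | succ k ih =>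
    intro i h0 y hy t
    set d := (t : A) * y - y * (t : A) with hdd
    have hd : d ∈ setPow (a : Set A) (i + 1) := by
      have := hgr 0 i (t : A) y trivial hy
      simpa using this
    have hbot : setPow (a : Set A) ((i + 1) + k) = ⊥ := by
      rw [show (i + 1) + k = i + (k + 1) by omega]; exact h0
    have hIH : ((1 : A) /ₒ t) * (ν d : As) ∈ Pgrp a s (i + 1) := ih (i + 1) hbot d hd t
    have key : ((1 : A) /ₒ t) * (ν y : As)
        = (ν y : As) * ((1 : A) /ₒ t) - (((1 : A) /ₒ t) * ν d) * ((1 : A) /ₒ t) := by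
      refine inv_comm_aux _ _ _ _ (num_mul_inv s t) (inv_mul_num s t) ?_
      have hyt : y * (t : A) = (t : A) * y - d := by rw [hdd]; noncomm_ring
      rw [← map_mul, ← map_mul, ← map_sub, hyt]
    rw [key]
    refine AddSubgroup.sub_mem _ (AddSubgroup.subset_closure ⟨y, hy, _, rfl⟩) ?_
    exact Pgrp_le_succ a s i (Pgrp_mul_right a s (i + 1) _ _ hIH)

variable (hnil : ∃ n : ℕ, setPow (a : Set A) n = ⊥)

include hnil in
lemma nil_shift (i : ℕ) : ∃ k, setPow (a : Set A) (i + k) = ⊥ := by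
  obtain ⟨n, hn⟩ := hnil
  exact ⟨n, le_bot_iff.mp (hn ▸ setPow_le_of_le a (Nat.le_add_left n i))⟩

include hgr hnil in
lemma Pgrp_inv_mul_left (i : ℕ) (t : Submonoid.powers s) :
    ∀ x ∈ Pgrp a s i, ((1 : A) /ₒ t) * x ∈ Pgrp a s i := by
  refine closure_map_le_aux (AddMonoidHom.mulLeft ((1 : A) /ₒ t)) _ _ ?_
  rintro w ⟨y, hy, u, rfl⟩
  obtain ⟨k, hk⟩ := nil_shift a hnil i
  have h1 := keyP a s hgr k i hk y hy t
  have h2 := Pgrp_mul_right a s i u _ h1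
  show ((1 : A) /ₒ t) * ((ν y : As) * u) ∈ Pgrp a s i
  rwa [← mul_assoc]

include hgr hnil in
lemma Pgrp_mul_left (i : ℕ) (x : As) : ∀ v ∈ Pgrp a s i, x * v ∈ Pgrp a s i := by
  intro v hv
  induction x using OreLocalization.ind with
  | _ r t =>
    rw [oreDiv_decomp, mul_assoc]
    exact Pgrp_inv_mul_left a s hgr hnil i t _
      (Pgrp_num_mul_left a s i r v hv)

include hgr hnil in
lemma Pgrp_mul_Pgrp (i : ℕ) : ∀ y ∈ Pgrp a s i, ∀ z ∈ Pgrp a s 1,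
    y * z ∈ Pgrp a s (i + 1) := by
  intro y hy z hz
  refine closure_map_le_aux (AddMonoidHom.mulRight z) _ _ ?_ y hy
  rintro w ⟨y', hy', u, rfl⟩
  have h1 : u * z ∈ Pgrp a s 1 := Pgrp_mul_left a s hgr hnil 1 u z hz
  have h2 : ∀ w ∈ Pgrp a s 1, (ν y' : As) * w ∈ Pgrp a s (i + 1) := by
    refine closure_map_le_aux (AddMonoidHom.mulLeft (ν y' : As)) _ _ ?_
    rintro w' ⟨y'', hy'', u', rfl⟩
    have hmem : y' * y'' ∈ setPow (a : Set A) (i + 1) := by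
      rw [setPow]
      exact AddSubgroup.subset_closure ⟨y', hy', y'', (mem_setPow_one a).mp hy'', rfl⟩
    exact AddSubgroup.subset_closure ⟨y' * y'', hmem, u', by
      simp only [AddMonoidHom.coe_mulLeft, map_mul, mul_assoc]⟩
  have h3 := h2 _ h1
  show ((ν y' : As) * u) * z ∈ Pgrp a s (i + 1)
  rwa [mul_assoc]

/- ### The canonical map and its kernel -/

variable (B : Type u) [CommRing B] (π : A →+* B)

lemma canonicalToLoc_oreDiv (r : A) (t : Submonoid.powers s) :
    canonicalToLoc s B π (r /ₒ t)
      = ((powersToUnits s B π t)⁻¹ : Units _)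
        * (algebraMap B (Localization (Submonoid.powers (π s))) (π r)) := rfl

variable (hπker : ∀ x : A, π x = 0 ↔ x ∈ a)

include hπker in
lemma canonicalToLoc_zero_iff (r : A) (t : Submonoid.powers s) :
    canonicalToLoc s B π (r /ₒ t) = 0 ↔ ∃ k : ℕ, s ^ k * r ∈ a := by
  rw [canonicalToLoc_oreDiv, Units.mul_right_eq_zero,
    IsLocalization.map_eq_zero_iff (Submonoid.powers (π s)) _ (π r)]
  constructor
  · rintro ⟨⟨m, k, hk⟩, hm⟩
    refine ⟨k, (hπker _).mp ?_⟩
    rw [map_mul, map_pow]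
    rw [show π s ^ k = m from hk]
    exact hm
  · rintro ⟨k, hk⟩
    refine ⟨⟨(π s) ^ k, k, rfl⟩, ?_⟩
    have := (hπker _).mpr hk
    rw [map_mul, map_pow] at this
    exact this

include hπker in
lemma canonicalToLoc_num_zero (y : A) (hy : y ∈ a) :
    canonicalToLoc s B π (ν y : As) = 0 := by
  rw [nrh_apply, canonicalToLoc_oreDiv]
  rw [(hπker y).mpr hy, map_zero, mul_zero]

include hgr hnil hπker in
/-- The kernel of the canonical map is exactly `𝔞·A_s`. -/
lemma ker_eq_Pgrp_one (x : As) :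
    canonicalToLoc s B π x = 0 ↔ x ∈ Pgrp a s 1 := by
  constructor
  · intro hx
    induction x using OreLocalization.ind with
    | _ r t =>
      obtain ⟨k, hk⟩ := (canonicalToLoc_zero_iff a s B π hπker r t).mp hx
      rw [oreDiv_expand s r t k, oreDiv_decomp s]
      obtain ⟨m, hm⟩ := nil_shift a hnil 1
      exact keyP a s hgr m 1 hm _ ((mem_setPow_one a).mpr hk) _
  · intro hx
    have hgen : ∀ w ∈ {w | ∃ y ∈ setPow (a : Set A) 1,
        ∃ u : OreLocalization (Submonoid.powers s) A, w = ν y * u},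
        w ∈ (canonicalToLoc s B π).toAddMonoidHom.ker := by
      rintro w ⟨y, hy, u, rfl⟩
      show canonicalToLoc s B π _ = 0
      rw [map_mul, canonicalToLoc_num_zero a s B π hπker y ((mem_setPow_one a).mp hy),
        zero_mul]
    exact closure_map_le_aux (AddMonoidHom.id _) _ _ hgen x hx

/- ### setPow of the kernel -/

lemma setPowK_mul_right (v : As) : ∀ (n : ℕ),
    ∀ x ∈ setPow {x : As | canonicalToLoc s B π x = 0} n,
      x * v ∈ setPow {x : As | canonicalToLoc s B π x = 0} n := by
  intro n
  cases n with
  | zero => intro x _; trivial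
  | succ n =>
    intro x hx
    rw [setPow] at hx ⊢
    refine closure_map_le_aux (AddMonoidHom.mulRight v) _ _ ?_ x hx
    rintro w ⟨y, hy, z, hz, rfl⟩
    refine AddSubgroup.subset_closure ⟨y, hy, z * v, ?_, by simp [mul_assoc]⟩
    show canonicalToLoc s B π (z * v) = 0
    rw [map_mul, hz, zero_mul]

include hgr hnil hπker in
lemma setPowK_eq_Pgrp : ∀ (i : ℕ), 1 ≤ i →
    setPow {x : As | canonicalToLoc s B π x = 0} i = Pgrp a s i := by
  intro i
  induction i with
  | zero => intro h; omega
  | succ i ih =>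
    intro _
    rcases Nat.eq_zero_or_pos i with rfl | hi
    · -- base case: i + 1 = 1
      apply le_antisymm
      · rw [setPow, AddSubgroup.closure_le]
        rintro w ⟨y, _, z, hz, rfl⟩
        have hzP : z ∈ Pgrp a s 1 :=
          (ker_eq_Pgrp_one a s hgr hnil B π hπker z).mp hz
        exact Pgrp_mul_left a s hgr hnil 1 y z hzP
      · intro x hx
        have hxk : canonicalToLoc s B π x = 0 :=
          (ker_eq_Pgrp_one a s hgr hnil B π hπker x).mpr hx
        rw [setPow]
        exact AddSubgroup.subset_closure ⟨1, trivial, x, hxk, (one_mul x).symm⟩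
    · -- inductive step
      have ihe := ih hi
      apply le_antisymm
      · rw [setPow, AddSubgroup.closure_le]
        rintro w ⟨y, hy, z, hz, rfl⟩
        rw [ihe] at hy
        have hzP : z ∈ Pgrp a s 1 :=
          (ker_eq_Pgrp_one a s hgr hnil B π hπker z).mp hz
        exact Pgrp_mul_Pgrp a s hgr hnil i y hy z hzP
      · rw [Pgrp, AddSubgroup.closure_le]
        rintro w ⟨y, hy, u, rfl⟩
        rw [setPow] at hy
        refine closure_map_le_aux
          ((AddMonoidHom.mulRight u).comp
            (OreLocalization.numeratorRingHom
              (S := Submonoid.powers s)).toAddMonoidHom) _ _ ?_ y hy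
        rintro w' ⟨y', hy', z', hz', rfl⟩
        show (ν (y' * z') : As) * u
          ∈ setPow {x : As | canonicalToLoc s B π x = 0} (i + 1)
        have h1 : (ν y' : As) * (ν z' : As)
            ∈ setPow {x : As | canonicalToLoc s B π x = 0} (i + 1) := by
          rw [setPow]
          refine AddSubgroup.subset_closure ⟨ν y', ?_, ν z', ?_, rfl⟩
          · rw [ihe]
            exact AddSubgroup.subset_closure ⟨y', hy', 1, (mul_one _).symm⟩
          · exact canonicalToLoc_num_zero a s B π hπker z' hz'
        have h2 := setPowK_mul_right s B π u (i + 1) _ h1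
        rw [map_mul]
        exact h2

/- ### Assembling the theorem -/

end Main

/-- Let `A` be a ring with a nilpotent two-sided ideal `𝔞` such that
`gr_𝔞(A)` is commutative, `s ∈ A`, and let `A_s` be the Ore ring of fractions of `A` with
respect to the denominator set `{s^j}`.  Let `B̄ := A/𝔞` (encoded as a commutative ring `B`
with a surjective homomorphism `π : A → B` whose kernel is `𝔞`), `s̄ = π s`, and let `𝔞_s`
be the kernel of the canonical ring homomorphism `A_s → B̄_{s̄}`.  Then
`𝔞_s = 𝔞·A_s = A_s·𝔞`, and `(𝔞_s)^i = 𝔞^i·A_s` for every `i ≥ 1`; in particular `𝔞_s` is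
a nilpotent (two-sided) ideal of `A_s`. -/
theorem stmt_2 {A : Type u} [Ring A] (a : TwoSidedIdeal A)
    (hnil : ∃ n : ℕ, setPow (a : Set A) n = ⊥)
    (hgr : ∀ (i j : ℕ) (x y : A), x ∈ setPow (a : Set A) i → y ∈ setPow (a : Set A) j →
      x * y - y * x ∈ setPow (a : Set A) (i + j + 1))
    (s : A) [OreLocalization.OreSet (Submonoid.powers s)]
    (B : Type u) [CommRing B] (π : A →+* B) (hπsurj : Function.Surjective π)
    (hπker : ∀ x : A, π x = 0 ↔ x ∈ a) :
    -- `𝔞_s = 𝔞·A_s`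
    (∀ x : OreLocalization (Submonoid.powers s) A,
      canonicalToLoc s B π x = 0 ↔
        x ∈ AddSubgroup.closure
          {w | ∃ y ∈ a, ∃ u : OreLocalization (Submonoid.powers s) A,
            w = OreLocalization.numeratorRingHom y * u}) ∧
    -- `𝔞_s = A_s·𝔞`
    (∀ x : OreLocalization (Submonoid.powers s) A,
      canonicalToLoc s B π x = 0 ↔
        x ∈ AddSubgroup.closure
          {w | ∃ y ∈ a, ∃ u : OreLocalization (Submonoid.powers s) A,
            w = u * OreLocalization.numeratorRingHom y}) ∧
    -- `(𝔞_s)^i = 𝔞^i·A_s` for `i ≥ 1`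
    (∀ i : ℕ, 1 ≤ i →
      setPow {x : OreLocalization (Submonoid.powers s) A | canonicalToLoc s B π x = 0} i =
        AddSubgroup.closure
          {w | ∃ y ∈ setPow (a : Set A) i, ∃ u : OreLocalization (Submonoid.powers s) A,
            w = OreLocalization.numeratorRingHom y * u}) ∧
    -- in particular, `𝔞_s` is nilpotent
    (∃ n : ℕ, setPow
      {x : OreLocalization (Submonoid.powers s) A | canonicalToLoc s B π x = 0} n = ⊥) := by
  have hset1 : {w | ∃ y ∈ a, ∃ u : OreLocalization (Submonoid.powers s) A,
      w = OreLocalization.numeratorRingHom y * u}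
      = {w | ∃ y ∈ setPow (a : Set A) 1, ∃ u : OreLocalization (Submonoid.powers s) A,
      w = OreLocalization.numeratorRingHom y * u} := by
    ext w
    constructor
    · rintro ⟨y, hy, u, rfl⟩; exact ⟨y, (mem_setPow_one a).mpr hy, u, rfl⟩
    · rintro ⟨y, hy, u, rfl⟩; exact ⟨y, (mem_setPow_one a).mp hy, u, rfl⟩
  have hP1 : AddSubgroup.closure {w | ∃ y ∈ a, ∃ u : OreLocalization (Submonoid.powers s) A,
      w = OreLocalization.numeratorRingHom y * u} = Pgrp a s 1 := by
    rw [hset1]; rfl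
  refine ⟨?_, ?_, ?_, ?_⟩
  · -- 𝔞_s = 𝔞·A_s
    intro x
    rw [hP1]
    exact ker_eq_Pgrp_one a s hgr hnil B π hπker x
  · -- 𝔞_s = A_s·𝔞
    intro x
    constructor
    · intro hx
      induction x using OreLocalization.ind with
      | _ r t =>
        obtain ⟨k, hk⟩ := (canonicalToLoc_zero_iff a s B π hπker r t).mp hx
        rw [oreDiv_expand s r t k, oreDiv_decomp s]
        exact AddSubgroup.subset_closure ⟨s ^ k * r, hk, _, rfl⟩
    · intro hx
      have hgen : ∀ w ∈ {w | ∃ y ∈ a, ∃ u : OreLocalization (Submonoid.powers s) A,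
          w = u * OreLocalization.numeratorRingHom y},
          w ∈ (canonicalToLoc s B π).toAddMonoidHom.ker := by
        rintro w ⟨y, hy, u, rfl⟩
        show canonicalToLoc s B π _ = 0
        rw [map_mul, canonicalToLoc_num_zero a s B π hπker y hy, mul_zero]
      exact closure_map_le_aux (AddMonoidHom.id _) _ _ hgen x hx
  · -- (𝔞_s)^i = 𝔞^i·A_s
    intro i hi
    exact setPowK_eq_Pgrp a s hgr hnil B π hπker i hi
  · -- nilpotency
    obtain ⟨n, hn⟩ := id hnil
    have hbot : setPow (a : Set A) (n + 1) = ⊥ :=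
      le_bot_iff.mp (hn ▸ setPow_succ_le a n)
    refine ⟨n + 1, ?_⟩
    rw [setPowK_eq_Pgrp a s hgr hnil B π hπker (n + 1) (by omega)]
    apply le_bot_iff.mp
    rw [Pgrp, AddSubgroup.closure_le]
    rintro w ⟨y, hy, u, rfl⟩
    rw [hbot, AddSubgroup.mem_bot] at hy
    subst hy
    simp
end

section
/- Let K be a field, (R, m) a parameter K-algebra, X a topological space, and 𝓜 a sheaf of R-modules on X which is flat over R and m-adically complete; set 𝓜_0 := K ⊗_R 𝓜 and assume X has enough 𝓜_0-acyclic open sets. Then for every j ≥ 0 the sheaf of R-modules m^j 𝓜 is m-adically complete. -/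
universe u
open CategoryTheory CategoryTheory.Limits TopologicalSpace Opposite TensorProduct

set_option synthInstance.maxHeartbeats 1000000
set_option maxHeartbeats 1000000

namespace DefSheaf

variable {X : TopCat.{u}}

/-- The Grothendieck topology of opens of the space `X`. -/
abbrev JJ (X : TopCat.{u}) : GrothendieckTopology (Opens X) :=
  Opens.grothendieckTopology X

section Extend

variable (R : Type u) [CommRing R] (S : Type u) [CommRing S] [Algebra R S]

/-- The presheaf `U ↦ Q ⊗_R Γ(U, F)` of `S`-modules obtained from a presheaf `F` of
`R`-modules and an `(S,R)`-bimodule `Q`.  For `Q = S/𝔫^{i+1}` (with `S` an `R`-algebra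
and `𝔫 ⊆ S` an ideal) this is the presheaf whose sheafification is `S_i ⊗_R F`. -/
noncomputable def extendPresheaf (Q : Type u) [AddCommGroup Q] [Module R Q] [Module S Q]
    [IsScalarTower R S Q] (F : TopCat.Presheaf (ModuleCat.{u} R) X) :
    TopCat.Presheaf (ModuleCat.{u} S) X where
  obj U := ModuleCat.of S (Q ⊗[R] (F.obj U))
  map {U V} h := ModuleCat.ofHom (AlgebraTensorModule.map LinearMap.id (F.map h).hom)
  map_id U := by
    apply ModuleCat.hom_ext
    apply LinearMap.ext
    intro t
    show (AlgebraTensorModule.map LinearMap.id (F.map (𝟙 U)).hom) t = t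
    rw [F.map_id]
    induction t using TensorProduct.induction_on with
    | zero => simp
    | tmul q x => rfl
    | add a b ha hb => rw [map_add, ha, hb]
  map_comp {U V W} h h' := by
    apply ModuleCat.hom_ext
    apply LinearMap.ext
    intro t
    show (AlgebraTensorModule.map LinearMap.id (F.map (h ≫ h')).hom) t =
      (AlgebraTensorModule.map LinearMap.id (F.map h').hom)
        ((AlgebraTensorModule.map LinearMap.id (F.map h).hom) t)
    rw [F.map_comp]
    induction t using TensorProduct.induction_on with
    | zero => simp
    | tmul q x => rfl
    | add a b ha hb => rw [map_add, ha, hb, map_add, map_add]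

/-- The natural transformation between extended presheaves induced by a map of
coefficients `g : Q' → Q` which is both `S`-linear and `R`-linear. -/
noncomputable def extendTrans (Q Q' : Type u) [AddCommGroup Q] [Module R Q] [Module S Q]
    [IsScalarTower R S Q] [AddCommGroup Q'] [Module R Q'] [Module S Q']
    [IsScalarTower R S Q'] (g : Q' →ₗ[S] Q)
    (F : TopCat.Presheaf (ModuleCat.{u} R) X) :
    extendPresheaf R S Q' F ⟶ extendPresheaf R S Q F where
  app U := ModuleCat.ofHom (AlgebraTensorModule.map g LinearMap.id)
  naturality {U V} h := by
    apply ModuleCat.hom_ext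
    apply LinearMap.ext
    intro t
    show (AlgebraTensorModule.map g LinearMap.id)
        ((AlgebraTensorModule.map LinearMap.id (F.map h).hom) t) =
      (AlgebraTensorModule.map LinearMap.id (F.map h).hom)
        ((AlgebraTensorModule.map g LinearMap.id) t)
    induction t using TensorProduct.induction_on with
    | zero => simp
    | tmul q x => rfl
    | add a b ha hb => rw [map_add, map_add, ha, hb, map_add, map_add]

end Extend

end DefSheaf

namespace DefSheaf

variable {X : TopCat.{u}}

section Completion

variable (S : Type u) [CommRing S] (n : Ideal S)

/-- The transition maps `S/𝔫^{i+2} → S/𝔫^{i+1}` between quotients modulo powers of an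
ideal. -/
noncomputable def quotTrans (i : ℕ) : (S ⧸ (n ^ (i + 2))) →ₗ[S] (S ⧸ (n ^ (i + 1))) :=
  Submodule.mapQ _ _ LinearMap.id
    (fun x hx => Ideal.pow_le_pow_right (Nat.le_succ _) hx)

variable (R : Type u) [CommRing R] [Algebra R S]
variable (F : TopCat.Presheaf (ModuleCat.{u} R) X)

/-- The sheaf (of `S`-modules) `S_i ⊗_R F`, where `S_i := S/𝔫^{i+1}`: the sheafification
of the presheaf `U ↦ S_i ⊗_R Γ(U, F)`. -/
noncomputable def extendSheaf (i : ℕ) : TopCat.Presheaf (ModuleCat.{u} S) X :=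
  CategoryTheory.sheafify (JJ X) (extendPresheaf R S (S ⧸ (n ^ (i + 1))) F)

/-- The transition maps `S_{i+1} ⊗_R F → S_i ⊗_R F` between the sheaves above. -/
noncomputable def extendSheafTrans (i : ℕ) :
    extendSheaf S n R F (i + 1) ⟶ extendSheaf S n R F i :=
  CategoryTheory.sheafifyMap (JJ X) (extendTrans R S _ _ (quotTrans S n i) F)

/-- The sections over `U` of the inverse limit `lim_i (S_i ⊗_R F)`, realized as
compatible families of sections. -/
noncomputable def completionSections (U : Opens X) :
    Submodule S (∀ i, ((extendSheaf S n R F i).obj (op U))) where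
  carrier := {f | ∀ i, (extendSheafTrans S n R F i).app (op U) (f (i + 1)) = f i}
  add_mem' := fun hf hg i => by simp only [Pi.add_apply, map_add]; rw [hf i, hg i]
  zero_mem' := fun i => by simp only [Pi.zero_apply, map_zero]
  smul_mem' := fun r f hf i => by simp only [Pi.smul_apply, map_smul]; rw [hf i]

end Completion

section SelfCompletion

variable (S : Type u) [CommRing S] (n : Ideal S)
variable (G : TopCat.Presheaf (ModuleCat.{u} S) X)

/-- The canonical map from a presheaf of `S`-modules to its reduction
`S/𝔫^{i+1} ⊗_S G`, `x ↦ 1 ⊗ x`. -/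
noncomputable def unitTrans (i : ℕ) :
    G ⟶ extendPresheaf S S (S ⧸ (n ^ (i + 1))) G where
  app U := ModuleCat.ofHom ((TensorProduct.mk S (S ⧸ (n ^ (i + 1))) (G.obj U)) 1)
  naturality {U V} h := by
    apply ModuleCat.hom_ext
    apply LinearMap.ext
    intro x
    rfl

/-- The canonical map from the sections of `G` over `U` to the sections of the
`𝔫`-adic completion `lim_i ((S/𝔫^{i+1}) ⊗_S G)` of `G` over `U`. -/
noncomputable def toCompletion (U : Opens X) :
    (G.obj (op U)) →ₗ[S] completionSections S n S G U where
  toFun x :=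
    ⟨fun i => (CategoryTheory.toSheafify (JJ X)
        (extendPresheaf S S (S ⧸ (n ^ (i + 1))) G)).app (op U)
        ((unitTrans S n G i).app (op U) x),
     by
      intro i
      have h1 := CategoryTheory.ConcreteCategory.congr_hom
        (CategoryTheory.NatTrans.congr_app
          (CategoryTheory.toSheafify_naturality (JJ X)
            (extendTrans S S _ _ (quotTrans S n i) G)) (op U))
        ((unitTrans S n G (i + 1)).app (op U) x)
      simp only [CategoryTheory.NatTrans.comp_app, CategoryTheory.comp_apply] at h1
      exact h1.symm⟩
  map_add' x y := by
    apply Subtype.ext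
    funext i
    simp only [map_add]
    rfl
  map_smul' r x := by
    apply Subtype.ext
    funext i
    simp only [map_smul]
    rfl

end SelfCompletion

end DefSheaf

namespace DefSheaf

variable {X : TopCat.{u}}

section Definitions

variable (S : Type u) [CommRing S] (n : Ideal S)

/-- A presheaf `G` of `S`-modules is `𝔫`-adically complete if the canonical map
`G → lim_i ((S/𝔫^{i+1}) ⊗_S G)` is an isomorphism, i.e. bijective on sections over
every open set. -/
def IsCompleteSheaf (G : TopCat.Presheaf (ModuleCat.{u} S) X) : Prop :=
  ∀ U : Opens X, Function.Bijective (toCompletion S n G U)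

/-- A presheaf of `S`-modules is flat if all its stalks are flat `S`-modules. -/
def IsFlatSheaf (G : TopCat.Presheaf (ModuleCat.{u} S) X) : Prop :=
  ∀ x : X, Module.Flat S (G.stalk x)

instance : (CategoryTheory.sheafToPresheaf (JJ X) (ModuleCat.{u} S)).Additive :=
  { map_add := rfl }

/-- The functor of sections over `U` on the category of sheaves of `S`-modules. -/
noncomputable def sectionsFunctor (U : Opens X) :
    CategoryTheory.Sheaf (JJ X) (ModuleCat.{u} S) ⥤ ModuleCat.{u} S :=
  CategoryTheory.sheafToPresheaf _ _ ⋙ (CategoryTheory.evaluation _ _).obj (op U)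

instance sectionsFunctorAdditive (U : Opens X) : (sectionsFunctor S U).Additive :=
  inferInstanceAs (Functor.Additive
    (CategoryTheory.sheafToPresheaf (JJ X) (ModuleCat.{u} S) ⋙
      (CategoryTheory.evaluation _ _).obj (op U)))

/-- An open set `U` is `G`-acyclic if the derived-functor sheaf cohomology
`H^i(U, G)` vanishes for all `i > 0`. -/
def IsAcyclic [CategoryTheory.HasInjectiveResolutions
      (CategoryTheory.Sheaf (JJ X) (ModuleCat.{u} S))]
    (G : CategoryTheory.Sheaf (JJ X) (ModuleCat.{u} S)) (U : Opens X) : Prop :=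
  ∀ i : ℕ, 0 < i → CategoryTheory.Limits.IsZero
    (((sectionsFunctor S U).rightDerived i).obj G)

/-- The space `X` has enough `G`-acyclic open sets: every open cover of every open
subset can be refined by an open cover all of whose finite (nonempty) intersections
are `G`-acyclic. -/
def HasEnoughAcyclics [CategoryTheory.HasInjectiveResolutions
      (CategoryTheory.Sheaf (JJ X) (ModuleCat.{u} S))]
    (G : CategoryTheory.Sheaf (JJ X) (ModuleCat.{u} S)) : Prop :=
  ∀ (U : Opens X) (ι : Type u) (V : ι → Opens X), (∀ k, V k ≤ U) → U ≤ iSup V →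
    ∃ (κ : Type u) (W : κ → Opens X),
      (∀ k, ∃ j, W k ≤ V j) ∧ U ≤ iSup W ∧
      ∀ s : Finset κ, s.Nonempty → IsAcyclic S G (s.inf W)

/-- The sheaf associated to a presheaf of `S`-modules, as an object of the category of
sheaves. -/
noncomputable def sheafOf (G : TopCat.Presheaf (ModuleCat.{u} S) X) :
    CategoryTheory.Sheaf (JJ X) (ModuleCat.{u} S) :=
  (CategoryTheory.presheafToSheaf _ _).obj G

end Definitions

end DefSheaf

namespace DefSheaf

variable {X : TopCat.{u}}

section InvLim

variable (S : Type u) [CommRing S]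
variable (D : ℕ → TopCat.Presheaf (ModuleCat.{u} S) X) (t : ∀ i, D (i + 1) ⟶ D i)

/-- The sections over `U` of the inverse limit `lim_i D_i` of an inverse system of
presheaves of `S`-modules: compatible families of sections. -/
noncomputable def invLimSections (U : Opens X) : Submodule S (∀ i, (D i).obj (op U)) where
  carrier := {f | ∀ i, (t i).app (op U) (f (i + 1)) = f i}
  add_mem' := fun hf hg i => by simp only [Pi.add_apply, map_add]; rw [hf i, hg i]
  zero_mem' := fun i => by simp only [Pi.zero_apply, map_zero]
  smul_mem' := fun r f hf i => by simp only [Pi.smul_apply, map_smul]; rw [hf i]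

/-- The inverse limit `lim_i D_i` of an inverse system of presheaves of `S`-modules,
computed sectionwise (since each `D_i` is a sheaf, this is the limit in the category of
sheaves). -/
noncomputable def invLimPresheaf : TopCat.Presheaf (ModuleCat.{u} S) X where
  obj U := ModuleCat.of S (invLimSections S D t (unop U))
  map {U V} h := ModuleCat.ofHom
    { toFun := fun f =>
        ⟨fun i => (D i).map h (f.1 i), by
          intro i
          have h1 := CategoryTheory.ConcreteCategory.congr_hom ((t i).naturality h) (f.1 (i + 1))
          show (t i).app V ((D (i + 1)).map h (f.1 (i + 1))) = (D i).map h (f.1 i)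
          rw [← f.2 i]
          exact h1⟩
      map_add' := fun f g => Subtype.ext (funext fun i => by
        show (D i).map h (f.1 i + g.1 i) = (D i).map h (f.1 i) + (D i).map h (g.1 i)
        rw [map_add])
      map_smul' := fun r f => Subtype.ext (funext fun i => by
        show (D i).map h (r • f.1 i) = r • ((D i).map h (f.1 i))
        rw [map_smul]) }
  map_id U := by
    apply ModuleCat.hom_ext
    apply LinearMap.ext
    intro f
    apply Subtype.ext
    funext i
    show (D i).map (𝟙 U) (f.1 i) = f.1 i
    rw [CategoryTheory.Functor.map_id]
    rfl
  map_comp {U V W} h h' := by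
    apply ModuleCat.hom_ext
    apply LinearMap.ext
    intro f
    apply Subtype.ext
    funext i
    show (D i).map (h ≫ h') (f.1 i) = (D i).map h' ((D i).map h (f.1 i))
    rw [CategoryTheory.Functor.map_comp]
    rfl

end InvLim

end DefSheaf

namespace DefSheaf

variable {X : TopCat.{u}}

section CanMaps

variable (S : Type u) [CommRing S]

/-- The projection from an inverse limit of presheaves to its `i`-th component. -/
noncomputable def invLimProj (D : ℕ → TopCat.Presheaf (ModuleCat.{u} S) X)
    (t : ∀ i, D (i + 1) ⟶ D i) (i : ℕ) : invLimPresheaf S D t ⟶ D i where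
  app U := ModuleCat.ofHom
    { toFun := fun f => f.1 i
      map_add' := fun f g => rfl
      map_smul' := fun r f => rfl }
  naturality {U V} h := rfl

/-- Given a map of presheaves `π : P → T` where `T` is killed by the ideal `J`, the
induced canonical map `(S/J) ⊗_S P → T`, `q ⊗ p ↦ q·π(p)`. -/
noncomputable def tensorQuotCan (J : Ideal S) (P T : TopCat.Presheaf (ModuleCat.{u} S) X)
    (π : P ⟶ T) (htor : ∀ (U : (Opens X)ᵒᵖ) (r : S), r ∈ J → ∀ y : T.obj U, r • y = 0) :
    extendPresheaf S S (S ⧸ J) P ⟶ T where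
  app U := ModuleCat.ofHom (TensorProduct.lift
    (Submodule.liftQ J (LinearMap.toSpanSingleton S _ (π.app U).hom)
      (fun r hr => by
        ext p
        exact htor U r hr _)))
  naturality {U V} h := by
    apply ModuleCat.hom_ext
    apply LinearMap.ext
    intro t
    show (TensorProduct.lift _) ((AlgebraTensorModule.map LinearMap.id (P.map h).hom) t) =
      (T.map h).hom ((TensorProduct.lift _) t)
    induction t using TensorProduct.induction_on with
    | zero => simp
    | add a b ha hb => simp only [map_add, ha, hb]
    | tmul q p =>
      obtain ⟨r, rfl⟩ := Submodule.Quotient.mk_surjective J q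
      show r • (π.app V) ((P.map h) p) = (T.map h) (r • ((π.app U) p))
      rw [map_smul]
      exact congrArg (fun y => r • y) (CategoryTheory.ConcreteCategory.congr_hom (π.naturality h) p)

/-- The morphism of sheaves induced by a morphism of presheaves `P ⟶ T` with `T` a
sheaf, via the universal property of sheafification. -/
noncomputable def sheafifyLiftMap (P : TopCat.Presheaf (ModuleCat.{u} S) X)
    (T : CategoryTheory.Sheaf (JJ X) (ModuleCat.{u} S)) (φ : P ⟶ T.val) :
    sheafOf S P ⟶ T :=
  ((CategoryTheory.sheafificationAdjunction (JJ X) (ModuleCat.{u} S)).homEquiv P T).symm φ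

end CanMaps

end DefSheaf

namespace DefSheaf

variable {X : TopCat.{u}}

section IdealSub

variable (R : Type u) [CommRing R] (m : Ideal R)

/-- The subpresheaf `U ↦ 𝔪^j·Γ(U, F)` of a presheaf `F` of `R`-modules; the sheaf
`𝔪^j F` is its sheafification. -/
noncomputable def idealSubPresheaf (j : ℕ) (F : TopCat.Presheaf (ModuleCat.{u} R) X) :
    TopCat.Presheaf (ModuleCat.{u} R) X where
  obj U := ModuleCat.of R ((m ^ j • ⊤ : Submodule R (F.obj U)) : Type u)
  map {U V} h := ModuleCat.ofHom ((F.map h).hom.restrict (p := m ^ j • ⊤) (q := m ^ j • ⊤) (fun x hx => by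
    have hle : Submodule.map (F.map h).hom ((m ^ j) • (⊤ : Submodule R (F.obj U))) ≤
        (m ^ j) • (⊤ : Submodule R (F.obj V)) := by
      rw [Submodule.map_smul'']
      exact Submodule.smul_mono le_rfl le_top
    exact hle ⟨x, hx, rfl⟩))
  map_id U := by
    apply ModuleCat.hom_ext
    apply LinearMap.ext
    intro x
    apply Subtype.ext
    show (F.map (𝟙 U)).hom x.1 = x.1
    rw [F.map_id]
    rfl
  map_comp {U V W} h h' := by
    apply ModuleCat.hom_ext
    apply LinearMap.ext
    intro x
    apply Subtype.ext
    show (F.map (h ≫ h')).hom x.1 = (F.map h').hom ((F.map h).hom x.1)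
    rw [F.map_comp]
    rfl

end IdealSub

end DefSheaf

namespace S11

open DefSheaf CategoryTheory CategoryTheory.Limits TopologicalSpace Opposite TensorProduct

variable {X : TopCat.{u}} (R : Type u) [CommRing R]

/-! ### Elementary tensor algebra over quotients of the base ring -/

lemma exists_one_tmul (I : Ideal R) {N : Type u} [AddCommGroup N] [Module R N]
    (σ : (R ⧸ I) ⊗[R] N) : ∃ x : N, σ = (1 : R ⧸ I) ⊗ₜ[R] x := by
  induction σ using TensorProduct.induction_on with
  | zero => exact ⟨0, (TensorProduct.tmul_zero _ _).symm⟩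
  | tmul q x =>
    obtain ⟨r, rfl⟩ := Ideal.Quotient.mk_surjective q
    have h1 : ((Ideal.Quotient.mk I) r) = r • (1 : R ⧸ I) := by
      rw [show (1 : R ⧸ I) = Submodule.Quotient.mk (1 : R) from rfl,
        ← Submodule.Quotient.mk_smul, smul_eq_mul, mul_one]; rfl
    exact ⟨r • x, by rw [h1, TensorProduct.smul_tmul]⟩
  | add a b ha hb =>
    obtain ⟨x, rfl⟩ := ha; obtain ⟨y, rfl⟩ := hb
    exact ⟨x + y, (TensorProduct.tmul_add _ _ _).symm⟩

/-- The canonical map `(R/I) ⊗ N → N/(I•⊤)`. -/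
noncomputable def quotCan (I : Ideal R) (N : Type u) [AddCommGroup N] [Module R N] :
    ((R ⧸ I) ⊗[R] N) →ₗ[R] (N ⧸ (I • (⊤ : Submodule R N))) :=
  TensorProduct.lift
    (Submodule.liftQ I (LinearMap.toSpanSingleton R _ (I • (⊤ : Submodule R N)).mkQ)
      (fun r hr => by
        ext p
        simp only [LinearMap.toSpanSingleton_apply, LinearMap.smul_apply,
          LinearMap.zero_apply]
        show r • Submodule.Quotient.mk p = 0
        rw [← Submodule.Quotient.mk_smul, Submodule.Quotient.mk_eq_zero]
        exact Submodule.smul_mem_smul hr trivial))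

lemma quotCan_one_tmul (I : Ideal R) {N : Type u} [AddCommGroup N] [Module R N] (x : N) :
    quotCan R I N ((1 : R ⧸ I) ⊗ₜ[R] x) = Submodule.Quotient.mk x := by
  unfold quotCan
  rw [TensorProduct.lift.tmul]
  change (1 : R) • (Submodule.Quotient.mk x : N ⧸ I • (⊤ : Submodule R N)) = _
  show (1 : R) • Submodule.Quotient.mk x = _
  rw [one_smul]

lemma one_tmul_eq_zero_iff (I : Ideal R) {N : Type u} [AddCommGroup N] [Module R N] (x : N) :
    (1 : R ⧸ I) ⊗ₜ[R] x = (0 : (R ⧸ I) ⊗[R] N) ↔ x ∈ I • (⊤ : Submodule R N) := by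
  constructor
  · intro h
    have := congrArg (quotCan R I N) h
    rw [quotCan_one_tmul, map_zero] at this
    exact (Submodule.Quotient.mk_eq_zero _).mp this
  · intro hx
    refine Submodule.smul_induction_on hx ?_ ?_
    · intro r hr nn _
      have h1 : (1 : R ⧸ I) ⊗ₜ[R] (r • nn) = ((Ideal.Quotient.mk I) r) ⊗ₜ[R] nn := by
        have : ((Ideal.Quotient.mk I) r) = r • (1 : R ⧸ I) := by
          rw [show (1 : R ⧸ I) = Submodule.Quotient.mk (1 : R) from rfl,
            ← Submodule.Quotient.mk_smul, smul_eq_mul, mul_one]; rfl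
        rw [this, TensorProduct.smul_tmul]
      rw [h1, Ideal.Quotient.eq_zero_iff_mem.mpr hr, TensorProduct.zero_tmul]
    · intro a b ha hb
      rw [TensorProduct.tmul_add, ha, hb, add_zero]

/-! ### Generic helpers on presheaves of modules -/

lemma res_res (F : TopCat.Presheaf (ModuleCat.{u} R) X) {U V W : Opens X}
    (hVU : V ≤ U) (hWV : W ≤ V) (s : F.obj (op U)) :
    F.map (homOfLE hWV).op (F.map (homOfLE hVU).op s) =
      F.map (homOfLE (hWV.trans hVU)).op s := by
  show (F.map (homOfLE hVU).op ≫ F.map (homOfLE hWV).op) s = _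
  rw [← F.map_comp, ← op_comp, homOfLE_comp]

lemma nat_app {F F' : TopCat.Presheaf (ModuleCat.{u} R) X} (η : F ⟶ F')
    {U V : Opens X} (hVU : V ≤ U) (s : F.obj (op U)) :
    η.app (op V) (F.map (homOfLE hVU).op s) =
      F'.map (homOfLE hVU).op (η.app (op U) s) := by
  have h := CategoryTheory.ConcreteCategory.congr_hom (η.naturality (homOfLE hVU).op) s
  simpa only [CategoryTheory.comp_apply] using h

/-! ### Locality for the topology of opens -/

lemma loc_surj (P : TopCat.Presheaf (ModuleCat.{u} R) X) {U : Opens X}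
    (s : (CategoryTheory.sheafify (JJ X) P).obj (op U)) {x : X} (hx : x ∈ U) :
    ∃ (V : Opens X) (hVU : V ≤ U), x ∈ V ∧ ∃ t : P.obj (op V),
      (CategoryTheory.toSheafify (JJ X) P).app (op V) t =
        (CategoryTheory.sheafify (JJ X) P).map (homOfLE hVU).op s := by
  have h := Presheaf.imageSieve_mem (JJ X) (CategoryTheory.toSheafify (JJ X) P) s
  obtain ⟨V, g, ⟨t, ht⟩, hxV⟩ := h x hx
  exact ⟨V, g.le, hxV, t, by rwa [Subsingleton.elim (homOfLE g.le) g]⟩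

lemma loc_eq (P : TopCat.Presheaf (ModuleCat.{u} R) X) {U : Opens X}
    (t t' : P.obj (op U))
    (h : (CategoryTheory.toSheafify (JJ X) P).app (op U) t =
      (CategoryTheory.toSheafify (JJ X) P).app (op U) t') {x : X} (hx : x ∈ U) :
    ∃ (V : Opens X) (hVU : V ≤ U), x ∈ V ∧
      P.map (homOfLE hVU).op t = P.map (homOfLE hVU).op t' := by
  have hmem := Presheaf.equalizerSieve_mem (JJ X) (CategoryTheory.toSheafify (JJ X) P) t t' h
  obtain ⟨V, g, hg, hxV⟩ := hmem x hx
  exact ⟨V, g.le, hxV, by rwa [Subsingleton.elim (homOfLE g.le) g]⟩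

lemma sep {F : TopCat.Presheaf (ModuleCat.{u} R) X} (hF : Presheaf.IsSheaf (JJ X) F)
    {U : Opens X} (s : F.obj (op U))
    (h : ∀ x : X, x ∈ U → ∃ (V : Opens X) (hVU : V ≤ U), x ∈ V ∧
      F.map (homOfLE hVU).op s = 0) : s = 0 := by
  let Fs : TopCat.Sheaf (ModuleCat.{u} R) X := ⟨F, hF⟩
  choose V hVU hxV hzero using h
  refine Fs.eq_of_locally_eq' (fun i : { x : X // x ∈ U } => V i.1 i.2) U
    (fun i => homOfLE (hVU i.1 i.2)) ?_ s 0 ?_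
  · intro x hx
    exact Opens.mem_iSup.mpr ⟨⟨x, hx⟩, hxV x hx⟩
  · intro i
    rw [map_zero]
    exact hzero i.1 i.2

lemma glue {F : TopCat.Presheaf (ModuleCat.{u} R) X} (hF : Presheaf.IsSheaf (JJ X) F)
    {U : Opens X} {ι : Type u} (V : ι → Opens X) (hVU : ∀ i, V i ≤ U)
    (hcov : U ≤ iSup V) (sf : ∀ i, F.obj (op (V i)))
    (hcomp : ∀ i k : ι, F.map (homOfLE (inf_le_left : V i ⊓ V k ≤ V i)).op (sf i) =
      F.map (homOfLE (inf_le_right : V i ⊓ V k ≤ V k)).op (sf k)) :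
    ∃ s : F.obj (op U), ∀ i, F.map (homOfLE (hVU i)).op s = sf i := by
  let Fs : TopCat.Sheaf (ModuleCat.{u} R) X := ⟨F, hF⟩
  obtain ⟨s, hs, -⟩ := Fs.existsUnique_gluing' V U (fun i => homOfLE (hVU i)) hcov sf
    (fun i k => by
      have := hcomp i k
      rwa [Subsingleton.elim (homOfLE _) (Opens.infLELeft (V i) (V k)),
        Subsingleton.elim (homOfLE _) (Opens.infLERight (V i) (V k))] at this)
  exact ⟨s, hs⟩

end S11

namespace S11

open DefSheaf CategoryTheory CategoryTheory.Limits TopologicalSpace Opposite TensorProduct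

variable {X : TopCat.{u}} (R : Type u) [CommRing R]
variable (n : Ideal R) (M : TopCat.Presheaf (ModuleCat.{u} R) X)

/-- The inclusion of the subpresheaf `𝔫^j M` into `M`. -/
noncomputable def incl (j : ℕ) : idealSubPresheaf R n j M ⟶ M where
  app U := ModuleCat.ofHom (Submodule.subtype _)
  naturality {U V} h := by ext x; rfl

variable (hM : Presheaf.IsSheaf (JJ X) M) (j : ℕ)

/-- The canonical map from the sheafification of `𝔫^j M` to `M`. -/
noncomputable def phi :
    CategoryTheory.sheafify (JJ X) (idealSubPresheaf R n j M) ⟶ M :=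
  CategoryTheory.sheafifyLift (JJ X) (incl R n M j) hM

lemma phi_toSheafify (V : (Opens X)ᵒᵖ) (t : (idealSubPresheaf R n j M).obj V) :
    (phi R n M hM j).app V
      ((CategoryTheory.toSheafify (JJ X) (idealSubPresheaf R n j M)).app V t) = t.1 := by
  have h := CategoryTheory.ConcreteCategory.congr_hom
    (NatTrans.congr_app
      (CategoryTheory.toSheafify_sheafifyLift (JJ X) (incl R n M j) hM) V) t
  simp only [NatTrans.comp_app, CategoryTheory.comp_apply] at h
  exact h

lemma phi_inj {W : Opens X}
    (g : (CategoryTheory.sheafify (JJ X) (idealSubPresheaf R n j M)).obj (op W))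
    (hg : (phi R n M hM j).app (op W) g = 0) : g = 0 := by
  refine sep R ((presheafToSheaf (JJ X) (ModuleCat.{u} R)).obj (idealSubPresheaf R n j M)).cond
    g ?_
  intro x hx
  obtain ⟨V, hVU, hxV, t, ht⟩ := loc_surj R (idealSubPresheaf R n j M) g hx
  refine ⟨V, hVU, hxV, ?_⟩
  have ht1 : t.1 = 0 := by
    have h1 := phi_toSheafify R n M hM j (op V) t
    rw [ht] at h1
    rw [← h1, nat_app R (phi R n M hM j) hVU g, hg, map_zero]
  have ht0 : t = 0 := Subtype.ext ht1
  rw [← ht, ht0, map_zero]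

lemma sub_le (i : ℕ) (W : (Opens X)ᵒᵖ) :
    (n ^ (i + 1 + j)) • (⊤ : Submodule R (M.obj W)) ≤
      Submodule.map ((phi R n M hM j).app W).hom ((n ^ (i + 1)) • ⊤) := by
  intro m hm
  have hEq : (n ^ (i + 1 + j)) • (⊤ : Submodule R (M.obj W)) =
      (n ^ (i + 1)) • ((n ^ j) • (⊤ : Submodule R (M.obj W))) := by
    rw [pow_add, ← smul_eq_mul, Submodule.smul_assoc]
  rw [hEq] at hm
  refine Submodule.smul_induction_on hm ?_ ?_
  · intro r hr z hz
    have hz1 : z = (phi R n M hM j).app W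
        ((CategoryTheory.toSheafify (JJ X) (idealSubPresheaf R n j M)).app W ⟨z, hz⟩) :=
      (phi_toSheafify R n M hM j W ⟨z, hz⟩).symm
    refine ⟨r • (CategoryTheory.toSheafify (JJ X) (idealSubPresheaf R n j M)).app W ⟨z, hz⟩,
      Submodule.smul_mem_smul hr trivial, ?_⟩
    rw [map_smul, ← hz1]
  · intro a b ha hb
    exact add_mem ha hb

/-- Functoriality of `Q ⊗ -` on presheaf morphisms, for `Q = R/I`. -/
noncomputable def extendMap (I : Ideal R) {F F' : TopCat.Presheaf (ModuleCat.{u} R) X}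
    (η : F ⟶ F') : extendPresheaf R R (R ⧸ I) F ⟶ extendPresheaf R R (R ⧸ I) F' where
  app U := ModuleCat.ofHom (AlgebraTensorModule.map LinearMap.id (η.app U).hom)
  naturality {U V} h := by
    apply ModuleCat.hom_ext
    apply LinearMap.ext
    intro t
    show (AlgebraTensorModule.map LinearMap.id (η.app V).hom)
        ((AlgebraTensorModule.map LinearMap.id (F.map h).hom) t) =
      (AlgebraTensorModule.map LinearMap.id (F'.map h).hom)
        ((AlgebraTensorModule.map LinearMap.id (η.app U).hom) t)
    induction t using TensorProduct.induction_on with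
    | zero => simp
    | tmul q x =>
      simp only [AlgebraTensorModule.map_tmul, LinearMap.id_coe, id_eq]
      have hnat := CategoryTheory.ConcreteCategory.congr_hom (η.naturality h) x
      exact congrArg (fun y => q ⊗ₜ[R] y) hnat
    | add a b ha hb => simp only [map_add, ha, hb]

end S11

namespace S11

open DefSheaf CategoryTheory CategoryTheory.Limits TopologicalSpace Opposite TensorProduct

variable {X : TopCat.{u}} (R : Type u) [CommRing R]
variable (n : Ideal R) (M : TopCat.Presheaf (ModuleCat.{u} R) X)
variable (hM : Presheaf.IsSheaf (JJ X) M) (j : ℕ)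

/-- The induced maps between the reductions of the sheafifications. -/
noncomputable def phiE (i : ℕ) :
    extendSheaf R n R (CategoryTheory.sheafify (JJ X) (idealSubPresheaf R n j M)) i ⟶
      extendSheaf R n R M i :=
  CategoryTheory.sheafifyMap (JJ X) (extendMap R (n ^ (i + 1)) (phi R n M hM j))

lemma extend_trans_comm (i : ℕ) {F F' : TopCat.Presheaf (ModuleCat.{u} R) X} (η : F ⟶ F') :
    extendTrans R R _ _ (quotTrans R n i) F ≫ extendMap R (n ^ (i + 1)) η =
      extendMap R (n ^ (i + 2)) η ≫ extendTrans R R _ _ (quotTrans R n i) F' := by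
  apply NatTrans.ext
  funext U
  apply ModuleCat.hom_ext
  apply LinearMap.ext
  intro t
  show (AlgebraTensorModule.map LinearMap.id (η.app U).hom)
      ((AlgebraTensorModule.map (quotTrans R n i) LinearMap.id) t) =
    (AlgebraTensorModule.map (quotTrans R n i) LinearMap.id)
      ((AlgebraTensorModule.map LinearMap.id (η.app U).hom) t)
  induction t using TensorProduct.induction_on with
  | zero => simp
  | tmul q x => rfl
  | add a b ha hb => simp only [map_add, ha, hb]

lemma phiE_trans (i : ℕ) :
    extendSheafTrans R n R (CategoryTheory.sheafify (JJ X) (idealSubPresheaf R n j M)) i ≫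
        phiE R n M hM j i =
      phiE R n M hM j (i + 1) ≫ extendSheafTrans R n R M i := by
  unfold phiE extendSheafTrans
  refine (CategoryTheory.sheafifyMap_comp _ _ _).symm.trans ?_
  refine Eq.trans ?_ (CategoryTheory.sheafifyMap_comp _ _ _)
  exact congrArg _ (extend_trans_comm R n i (phi R n M hM j))

lemma phiE_tmul {W : Opens X} (i : ℕ)
    (g : (CategoryTheory.sheafify (JJ X) (idealSubPresheaf R n j M)).obj (op W)) :
    (phiE R n M hM j i).app (op W)
      ((CategoryTheory.toSheafify (JJ X)
        (extendPresheaf R R (R ⧸ n ^ (i + 1))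
          (CategoryTheory.sheafify (JJ X) (idealSubPresheaf R n j M)))).app (op W)
        ((1 : R ⧸ n ^ (i + 1)) ⊗ₜ[R] g)) =
    (CategoryTheory.toSheafify (JJ X) (extendPresheaf R R (R ⧸ n ^ (i + 1)) M)).app (op W)
      ((1 : R ⧸ n ^ (i + 1)) ⊗ₜ[R] ((phi R n M hM j).app (op W) g)) := by
  have h := CategoryTheory.ConcreteCategory.congr_hom
    (NatTrans.congr_app
      (CategoryTheory.toSheafify_naturality (JJ X)
        (extendMap R (n ^ (i + 1)) (phi R n M hM j))) (op W))
    ((1 : R ⧸ n ^ (i + 1)) ⊗ₜ[R] g)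
  simp only [NatTrans.comp_app, CategoryTheory.comp_apply] at h
  exact h.symm

lemma toSheafify_tmul_res (F : TopCat.Presheaf (ModuleCat.{u} R) X) (I : Ideal R)
    {V W : Opens X} (hWV : W ≤ V) (y : F.obj (op V)) :
    (CategoryTheory.sheafify (JJ X) (extendPresheaf R R (R ⧸ I) F)).map (homOfLE hWV).op
      ((CategoryTheory.toSheafify (JJ X) (extendPresheaf R R (R ⧸ I) F)).app (op V)
        ((1 : R ⧸ I) ⊗ₜ[R] y)) =
    (CategoryTheory.toSheafify (JJ X) (extendPresheaf R R (R ⧸ I) F)).app (op W)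
      ((1 : R ⧸ I) ⊗ₜ[R] (F.map (homOfLE hWV).op y)) := by
  exact (nat_app R (CategoryTheory.toSheafify (JJ X) (extendPresheaf R R (R ⧸ I) F)) hWV
    ((1 : R ⧸ I) ⊗ₜ[R] y)).symm

lemma quotTrans_one (i : ℕ) : quotTrans R n i (1 : R ⧸ n ^ (i + 2)) = 1 := by
  unfold quotTrans
  rw [show (1 : R ⧸ n ^ (i + 2)) = Submodule.Quotient.mk (1 : R) from rfl,
    Submodule.mapQ_apply]
  rfl

lemma trans_tmul (F : TopCat.Presheaf (ModuleCat.{u} R) X) (i : ℕ) {W : Opens X}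
    (g : F.obj (op W)) :
    (extendSheafTrans R n R F i).app (op W)
      ((CategoryTheory.toSheafify (JJ X)
        (extendPresheaf R R (R ⧸ n ^ (i + 2)) F)).app (op W)
        ((1 : R ⧸ n ^ (i + 2)) ⊗ₜ[R] g)) =
    (CategoryTheory.toSheafify (JJ X) (extendPresheaf R R (R ⧸ n ^ (i + 1)) F)).app (op W)
      ((1 : R ⧸ n ^ (i + 1)) ⊗ₜ[R] g) := by
  have h := CategoryTheory.ConcreteCategory.congr_hom
    (NatTrans.congr_app
      (CategoryTheory.toSheafify_naturality (JJ X)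
        (extendTrans R R _ _ (quotTrans R n i) F)) (op W))
    ((1 : R ⧸ n ^ (i + 2)) ⊗ₜ[R] g)
  simp only [NatTrans.comp_app, CategoryTheory.comp_apply] at h
  have h2 : (extendTrans R R _ _ (quotTrans R n i) F).app (op W)
      ((1 : R ⧸ n ^ (i + 2)) ⊗ₜ[R] g) = (1 : R ⧸ n ^ (i + 1)) ⊗ₜ[R] g := by
    show (AlgebraTensorModule.map (quotTrans R n i) LinearMap.id)
        ((1 : R ⧸ n ^ (i + 2)) ⊗ₜ[R] g) = _
    rw [AlgebraTensorModule.map_tmul, quotTrans_one]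
    rfl
  have h' : (extendSheafTrans R n R F i).app (op W)
      ((CategoryTheory.toSheafify (JJ X)
        (extendPresheaf R R (R ⧸ n ^ (i + 2)) F)).app (op W)
        ((1 : R ⧸ n ^ (i + 2)) ⊗ₜ[R] g)) =
    (CategoryTheory.toSheafify (JJ X) (extendPresheaf R R (R ⧸ n ^ (i + 1)) F)).app (op W)
      ((extendTrans R R _ _ (quotTrans R n i) F).app (op W)
        ((1 : R ⧸ n ^ (i + 2)) ⊗ₜ[R] g)) := h.symm
  rw [h', h2]

/-- Iterated transition maps. -/
noncomputable def tau (F : TopCat.Presheaf (ModuleCat.{u} R) X) (i : ℕ) :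
    (k : ℕ) → (extendSheaf R n R F (i + k) ⟶ extendSheaf R n R F i)
  | 0 => 𝟙 _
  | k + 1 => extendSheafTrans R n R F (i + k) ≫ tau F i k

lemma tau_family (F : TopCat.Presheaf (ModuleCat.{u} R) X) {U : Opens X}
    (f : ∀ i, (extendSheaf R n R F i).obj (op U))
    (hf : ∀ i, (extendSheafTrans R n R F i).app (op U) (f (i + 1)) = f i) (i : ℕ) :
    ∀ k, (tau R n F i k).app (op U) (f (i + k)) = f i
  | 0 => rfl
  | k + 1 => by
    have h1 : (tau R n F i (k + 1)).app (op U) (f (i + (k + 1))) =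
        (tau R n F i k).app (op U)
          ((extendSheafTrans R n R F (i + k)).app (op U) (f ((i + k) + 1))) := by
      rfl
    rw [h1, hf (i + k), tau_family F f hf i k]

lemma tau_tmul (F : TopCat.Presheaf (ModuleCat.{u} R) X) (i : ℕ) {W : Opens X} :
    ∀ (k : ℕ) (g : F.obj (op W)),
    (tau R n F i k).app (op W)
      ((CategoryTheory.toSheafify (JJ X)
        (extendPresheaf R R (R ⧸ n ^ (i + k + 1)) F)).app (op W)
        ((1 : R ⧸ n ^ (i + k + 1)) ⊗ₜ[R] g)) =
    (CategoryTheory.toSheafify (JJ X) (extendPresheaf R R (R ⧸ n ^ (i + 1)) F)).app (op W)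
      ((1 : R ⧸ n ^ (i + 1)) ⊗ₜ[R] g)
  | 0, g => rfl
  | k + 1, g => by
    have h1 : ((tau R n F i (k + 1)).app (op W)).hom =
        ((tau R n F i k).app (op W)).hom ∘ₗ ((extendSheafTrans R n R F (i + k)).app (op W)).hom := by
      rfl
    show (tau R n F i k).app (op W) ((extendSheafTrans R n R F (i + k)).app (op W) _) = _
    exact (congrArg ((tau R n F i k).app (op W)) (trans_tmul R n F (i + k) g)).trans
      (tau_tmul F i k g)

end S11

namespace S11

open DefSheaf CategoryTheory CategoryTheory.Limits TopologicalSpace Opposite TensorProduct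

variable {X : TopCat.{u}} (R : Type u) [CommRing R]
variable (n : Ideal R) (M : TopCat.Presheaf (ModuleCat.{u} R) X)
variable (hM : Presheaf.IsSheaf (JJ X) M) (j : ℕ)

/-- Abbreviation for the sheafification of `𝔫^j M`. -/
noncomputable abbrev GG : TopCat.Presheaf (ModuleCat.{u} R) X :=
  CategoryTheory.sheafify (JJ X) (idealSubPresheaf R n j M)

lemma kill {U : Opens X} (i : ℕ) (d : (extendSheaf R n R (GG R n M j) (i + j)).obj (op U))
    (hd : (phiE R n M hM j (i + j)).app (op U) d = 0) :
    (tau R n (GG R n M j) i j).app (op U) d = 0 := by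
  refine sep R ((presheafToSheaf (JJ X) (ModuleCat.{u} R)).obj
    (extendPresheaf R R (R ⧸ n ^ (i + 1)) (GG R n M j))).cond _ ?_
  intro x hx
  obtain ⟨V, hVU, hxV, σ, hσ⟩ :=
    loc_surj R (extendPresheaf R R (R ⧸ n ^ (i + j + 1)) (GG R n M j)) d hx
  obtain ⟨g₀, rfl⟩ := exists_one_tmul R (n ^ (i + j + 1)) σ
  have hσ' : (CategoryTheory.toSheafify (JJ X)
      (extendPresheaf R R (R ⧸ n ^ (i + j + 1)) (GG R n M j))).app (op V)
        ((1 : R ⧸ n ^ (i + j + 1)) ⊗ₜ[R] g₀) =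
      (extendSheaf R n R (GG R n M j) (i + j)).map (homOfLE hVU).op d := hσ
  have hphiV : (phiE R n M hM j (i + j)).app (op V)
      ((extendSheaf R n R (GG R n M j) (i + j)).map (homOfLE hVU).op d)
      = 0 := by
    rw [nat_app R (phiE R n M hM j (i + j)) hVU d, hd, map_zero]
  rw [← hσ', phiE_tmul R n M hM j (i + j) g₀] at hphiV
  have h0 : (CategoryTheory.toSheafify (JJ X)
      (extendPresheaf R R (R ⧸ n ^ (i + j + 1)) M)).app (op V)
        ((1 : R ⧸ n ^ (i + j + 1)) ⊗ₜ[R] ((phi R n M hM j).app (op V) g₀)) =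
      (CategoryTheory.toSheafify (JJ X)
        (extendPresheaf R R (R ⧸ n ^ (i + j + 1)) M)).app (op V) 0 := by
    rw [map_zero, hphiV]; rfl
  obtain ⟨W, hWV, hxW, heq⟩ :=
    loc_eq R (extendPresheaf R R (R ⧸ n ^ (i + j + 1)) M) _ 0 h0 hxV
  have heq' : (1 : R ⧸ n ^ (i + j + 1)) ⊗ₜ[R]
      (M.map (homOfLE hWV).op ((phi R n M hM j).app (op V) g₀)) =
      (0 : (R ⧸ n ^ (i + j + 1)) ⊗[R] (M.obj (op W))) := by
    have h2 : (extendPresheaf R R (R ⧸ n ^ (i + j + 1)) M).map (homOfLE hWV).op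
        ((1 : R ⧸ n ^ (i + j + 1)) ⊗ₜ[R] ((phi R n M hM j).app (op V) g₀)) =
        (1 : R ⧸ n ^ (i + j + 1)) ⊗ₜ[R]
          (M.map (homOfLE hWV).op ((phi R n M hM j).app (op V) g₀)) := rfl
    rw [← h2, heq, map_zero]; rfl
  have hphig₁ : M.map (homOfLE hWV).op ((phi R n M hM j).app (op V) g₀) =
      (phi R n M hM j).app (op W) ((GG R n M j).map (homOfLE hWV).op g₀) :=
    (nat_app R (phi R n M hM j) hWV g₀).symm
  rw [hphig₁] at heq'
  have hmem := (one_tmul_eq_zero_iff R (n ^ (i + j + 1)) _).mp heq'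
  rw [show i + j + 1 = i + 1 + j from by omega] at hmem
  obtain ⟨h₁, hh₁, hph⟩ := sub_le R n M hM j i (op W) hmem
  have hgh : (GG R n M j).map (homOfLE hWV).op g₀ = h₁ := by
    have hz : (phi R n M hM j).app (op W)
        ((GG R n M j).map (homOfLE hWV).op g₀ - h₁) = 0 := by
      rw [map_sub, hph, sub_self]
    have := phi_inj R n M hM j _ hz
    exact (sub_eq_zero.mp this)
  refine ⟨W, hWV.trans hVU, hxW, ?_⟩
  show (extendSheaf R n R (GG R n M j) i).map (homOfLE (hWV.trans hVU)).op
    ((tau R n (GG R n M j) i j).app (op U) d) = 0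
  have step1 : (extendSheaf R n R (GG R n M j) i).map (homOfLE (hWV.trans hVU)).op
      ((tau R n (GG R n M j) i j).app (op U) d) =
      (tau R n (GG R n M j) i j).app (op W)
        ((extendSheaf R n R (GG R n M j) (i + j)).map (homOfLE (hWV.trans hVU)).op d) :=
    (nat_app R (tau R n (GG R n M j) i j) (hWV.trans hVU) d).symm
  have htr : (extendSheaf R n R (GG R n M j) (i + j)).map (homOfLE hWV).op
      ((CategoryTheory.toSheafify (JJ X)
        (extendPresheaf R R (R ⧸ n ^ (i + j + 1)) (GG R n M j))).app (op V)
        ((1 : R ⧸ n ^ (i + j + 1)) ⊗ₜ[R] g₀)) =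
      (CategoryTheory.toSheafify (JJ X)
        (extendPresheaf R R (R ⧸ n ^ (i + j + 1)) (GG R n M j))).app (op W)
        ((1 : R ⧸ n ^ (i + j + 1)) ⊗ₜ[R] ((GG R n M j).map (homOfLE hWV).op g₀)) :=
    toSheafify_tmul_res R (GG R n M j) (n ^ (i + j + 1)) hWV g₀
  have step2 : (extendSheaf R n R (GG R n M j) (i + j)).map
        (homOfLE (hWV.trans hVU)).op d =
      (CategoryTheory.toSheafify (JJ X)
        (extendPresheaf R R (R ⧸ n ^ (i + j + 1)) (GG R n M j))).app (op W)
        ((1 : R ⧸ n ^ (i + j + 1)) ⊗ₜ[R] ((GG R n M j).map (homOfLE hWV).op g₀)) := by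
    rw [← res_res R (extendSheaf R n R (GG R n M j) (i + j)) hVU hWV d, ← hσ', htr]
  have step3 := tau_tmul R n (GG R n M j) i j ((GG R n M j).map (homOfLE hWV).op g₀)
  have hzero : (1 : R ⧸ n ^ (i + 1)) ⊗ₜ[R] ((GG R n M j).map (homOfLE hWV).op g₀) =
      (0 : (R ⧸ n ^ (i + 1)) ⊗[R] ((GG R n M j).obj (op W))) := by
    refine (one_tmul_eq_zero_iff R (n ^ (i + 1)) _).mpr ?_
    rw [hgh]; exact hh₁
  rw [step1, step2, step3, hzero]; exact map_zero _

lemma lift_local {U : Opens X} (s : M.obj (op U))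
    (sj : (extendSheaf R n R (GG R n M j) j).obj (op U))
    (hsj : (phiE R n M hM j j).app (op U) sj =
      (CategoryTheory.toSheafify (JJ X) (extendPresheaf R R (R ⧸ n ^ (j + 1)) M)).app
        (op U) ((1 : R ⧸ n ^ (j + 1)) ⊗ₜ[R] s))
    {x : X} (hx : x ∈ U) :
    ∃ (W : Opens X) (hWU : W ≤ U), x ∈ W ∧
      ∃ g, (phi R n M hM j).app (op W) g = M.map (homOfLE hWU).op s := by
  obtain ⟨V, hVU, hxV, σ, hσ⟩ :=
    loc_surj R (extendPresheaf R R (R ⧸ n ^ (j + 1)) (GG R n M j)) sj hx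
  obtain ⟨g₀, rfl⟩ := exists_one_tmul R (n ^ (j + 1)) σ
  have h1 : (CategoryTheory.toSheafify (JJ X)
      (extendPresheaf R R (R ⧸ n ^ (j + 1)) M)).app (op V)
        ((1 : R ⧸ n ^ (j + 1)) ⊗ₜ[R] ((phi R n M hM j).app (op V) g₀)) =
      (CategoryTheory.toSheafify (JJ X)
        (extendPresheaf R R (R ⧸ n ^ (j + 1)) M)).app (op V)
        ((1 : R ⧸ n ^ (j + 1)) ⊗ₜ[R] (M.map (homOfLE hVU).op s)) := by
    calc (show (extendSheaf R n R M j).obj (op V) from (CategoryTheory.toSheafify (JJ X)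
        (extendPresheaf R R (R ⧸ n ^ (j + 1)) M)).app (op V)
          ((1 : R ⧸ n ^ (j + 1)) ⊗ₜ[R] ((phi R n M hM j).app (op V) g₀)))
        = (phiE R n M hM j j).app (op V)
            ((CategoryTheory.toSheafify (JJ X)
              (extendPresheaf R R (R ⧸ n ^ (j + 1)) (GG R n M j))).app (op V)
              ((1 : R ⧸ n ^ (j + 1)) ⊗ₜ[R] g₀)) := (phiE_tmul R n M hM j j g₀).symm
      _ = (phiE R n M hM j j).app (op V)
            ((extendSheaf R n R (GG R n M j) j).map (homOfLE hVU).op sj) := by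
              have hσ' : (CategoryTheory.toSheafify (JJ X)
                  (extendPresheaf R R (R ⧸ n ^ (j + 1)) (GG R n M j))).app (op V)
                    ((1 : R ⧸ n ^ (j + 1)) ⊗ₜ[R] g₀) =
                  (extendSheaf R n R (GG R n M j) j).map (homOfLE hVU).op sj := hσ
              rw [hσ']
      _ = (extendSheaf R n R M j).map (homOfLE hVU).op
            ((phiE R n M hM j j).app (op U) sj) :=
        nat_app R (phiE R n M hM j j) hVU sj
      _ = (extendSheaf R n R M j).map (homOfLE hVU).op
            ((CategoryTheory.toSheafify (JJ X)
              (extendPresheaf R R (R ⧸ n ^ (j + 1)) M)).app (op U)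
              ((1 : R ⧸ n ^ (j + 1)) ⊗ₜ[R] s)) := by rw [hsj]
      _ = (show (extendSheaf R n R M j).obj (op V) from (CategoryTheory.toSheafify (JJ X)
            (extendPresheaf R R (R ⧸ n ^ (j + 1)) M)).app (op V)
            ((1 : R ⧸ n ^ (j + 1)) ⊗ₜ[R] (M.map (homOfLE hVU).op s))) := by
        exact toSheafify_tmul_res R M (n ^ (j + 1)) hVU s
  obtain ⟨W, hWV, hxW, heq⟩ :=
    loc_eq R (extendPresheaf R R (R ⧸ n ^ (j + 1)) M) _ _ h1 hxV
  have hh : (1 : R ⧸ n ^ (j + 1)) ⊗ₜ[R]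
      (M.map (homOfLE hWV).op ((phi R n M hM j).app (op V) g₀)) =
      (1 : R ⧸ n ^ (j + 1)) ⊗ₜ[R]
        (M.map (homOfLE hWV).op (M.map (homOfLE hVU).op s)) := heq
  have heq' : (1 : R ⧸ n ^ (j + 1)) ⊗ₜ[R]
      (M.map (homOfLE hWV).op ((phi R n M hM j).app (op V) g₀) -
        M.map (homOfLE hWV).op (M.map (homOfLE hVU).op s)) =
      (0 : (R ⧸ n ^ (j + 1)) ⊗[R] (M.obj (op W))) := by
    rw [TensorProduct.tmul_sub, hh, sub_self]
  have hmem := (one_tmul_eq_zero_iff R (n ^ (j + 1)) _).mp heq'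
  rw [res_res R M hVU hWV s] at hmem
  rw [show j + 1 = 0 + 1 + j from by omega] at hmem
  obtain ⟨h₁, hh₁, hph⟩ := sub_le R n M hM j 0 (op W) hmem
  refine ⟨W, hWV.trans hVU, hxW, (GG R n M j).map (homOfLE hWV).op g₀ - h₁, ?_⟩
  rw [map_sub, hph, nat_app R (phi R n M hM j) hWV g₀]
  exact sub_sub_cancel _ _

lemma glue_lift {U : Opens X} (s : M.obj (op U))
    (h : ∀ x : X, x ∈ U → ∃ (W : Opens X) (hWU : W ≤ U), x ∈ W ∧
      ∃ g, (phi R n M hM j).app (op W) g = M.map (homOfLE hWU).op s) :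
    ∃ g, (phi R n M hM j).app (op U) g = s := by
  choose W hWU hxW g hg using h
  have hcov : U ≤ iSup (fun i : { x : X // x ∈ U } => W i.1 i.2) := by
    intro x hx
    exact Opens.mem_iSup.mpr ⟨⟨x, hx⟩, hxW x hx⟩
  have hcomp : ∀ i k : { x : X // x ∈ U },
      (GG R n M j).map (homOfLE (inf_le_left : W i.1 i.2 ⊓ W k.1 k.2 ≤ W i.1 i.2)).op
        (g i.1 i.2) =
      (GG R n M j).map (homOfLE (inf_le_right : W i.1 i.2 ⊓ W k.1 k.2 ≤ W k.1 k.2)).op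
        (g k.1 k.2) := by
    intro i k
    have hi : (phi R n M hM j).app (op (W i.1 i.2 ⊓ W k.1 k.2))
        ((GG R n M j).map (homOfLE inf_le_left).op (g i.1 i.2)) =
        M.map (homOfLE ((inf_le_left.trans (hWU i.1 i.2)) :
          W i.1 i.2 ⊓ W k.1 k.2 ≤ U)).op s := by
      rw [nat_app R (phi R n M hM j) inf_le_left (g i.1 i.2), hg i.1 i.2,
        res_res R M (hWU i.1 i.2) inf_le_left s]
    have hk : (phi R n M hM j).app (op (W i.1 i.2 ⊓ W k.1 k.2))
        ((GG R n M j).map (homOfLE inf_le_right).op (g k.1 k.2)) =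
        M.map (homOfLE ((inf_le_left.trans (hWU i.1 i.2)) :
          W i.1 i.2 ⊓ W k.1 k.2 ≤ U)).op s := by
      rw [nat_app R (phi R n M hM j) inf_le_right (g k.1 k.2), hg k.1 k.2,
        res_res R M (hWU k.1 k.2) inf_le_right s]
    have hz : (phi R n M hM j).app (op (W i.1 i.2 ⊓ W k.1 k.2))
        ((GG R n M j).map (homOfLE inf_le_left).op (g i.1 i.2) -
          (GG R n M j).map (homOfLE inf_le_right).op (g k.1 k.2)) = 0 := by
      rw [map_sub, hi, hk, sub_self]
    exact sub_eq_zero.mp (phi_inj R n M hM j _ hz)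
  obtain ⟨g₀, hg₀⟩ := glue R
    ((presheafToSheaf (JJ X) (ModuleCat.{u} R)).obj (idealSubPresheaf R n j M)).cond
    (fun i : { x : X // x ∈ U } => W i.1 i.2) (fun i => hWU i.1 i.2) hcov
    (fun i => g i.1 i.2) hcomp
  refine ⟨g₀, ?_⟩
  have hdiff : (phi R n M hM j).app (op U) g₀ - s = 0 := by
    refine sep R hM _ ?_
    intro x hx
    refine ⟨W x hx, hWU x hx, hxW x hx, ?_⟩
    rw [map_sub, ← nat_app R (phi R n M hM j) (hWU x hx) g₀, hg₀ ⟨x, hx⟩, hg x hx,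
      sub_self]
  exact sub_eq_zero.mp hdiff

lemma toCompletion_eq_zero (hMv : Presheaf.IsSheaf (JJ X) M) {U : Opens X}
    (hcM : Function.Injective (toCompletion R n M U))
    (g : (GG R n M j).obj (op U))
    (hg : toCompletion R n (GG R n M j) U g = 0) : g = 0 := by
  have hphig : toCompletion R n M U ((phi R n M hMv j).app (op U) g) = 0 := by
    apply Subtype.ext
    funext i
    show (CategoryTheory.toSheafify (JJ X) (extendPresheaf R R (R ⧸ n ^ (i + 1)) M)).app
        (op U) ((1 : R ⧸ n ^ (i + 1)) ⊗ₜ[R] ((phi R n M hMv j).app (op U) g)) = 0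
    rw [← phiE_tmul R n M hMv j i g]
    have hcomp_i : (CategoryTheory.toSheafify (JJ X)
        (extendPresheaf R R (R ⧸ n ^ (i + 1)) (GG R n M j))).app (op U)
        ((1 : R ⧸ n ^ (i + 1)) ⊗ₜ[R] g) = 0 := by
      have h2 := congrArg (fun z => z.1 i) hg
      exact h2
    rw [hcomp_i]; exact map_zero _
  have h3 : (phi R n M hMv j).app (op U) g = 0 := by
    apply hcM
    rw [hphig, map_zero]
  exact phi_inj R n M hMv j g h3

end S11

open DefSheaf CategoryTheory TopologicalSpace Opposite

/-- Let `K` be a field, `(R, 𝔪)` a parameter `K`-algebra, `X` a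
topological space and `𝓜` a sheaf of `R`-modules on `X` which is flat over `R` and
`𝔪`-adically complete; set `𝓜₀ := K ⊗_R 𝓜` and assume `X` has enough `𝓜₀`-acyclic open
sets.  Then for every `j ≥ 0` the sheaf of `R`-modules `𝔪^j 𝓜` (the sheafification of
`U ↦ 𝔪^j Γ(U, 𝓜)`) is `𝔪`-adically complete. -/
theorem stmt_11
    (K : Type u) [Field K]
    (R : Type u) [CommRing R] [Algebra K R] [IsLocalRing R] [IsNoetherianRing R]
    (hres : Function.Bijective (algebraMap K (IsLocalRing.ResidueField R)))
    [IsAdicComplete (IsLocalRing.maximalIdeal R) R]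
    {X : TopCat.{u}}
    (M : TopCat.Presheaf (ModuleCat.{u} R) X) (hM : M.IsSheaf)
    (hflat : IsFlatSheaf R M)
    (hcomplete : IsCompleteSheaf R (IsLocalRing.maximalIdeal R) M)
    [HasInjectiveResolutions (Sheaf (JJ X) (ModuleCat.{u} R))]
    (henough : HasEnoughAcyclics R
      (sheafOf R (extendPresheaf R R (R ⧸ ((IsLocalRing.maximalIdeal R) ^ (0 + 1))) M))) :
    ∀ j : ℕ,
      IsCompleteSheaf R (IsLocalRing.maximalIdeal R)
        (CategoryTheory.sheafify (JJ X)
          (idealSubPresheaf R (IsLocalRing.maximalIdeal R) j M)) := by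
  intro j U
  have hM' : Presheaf.IsSheaf (JJ X) M := hM
  set m : Ideal R := IsLocalRing.maximalIdeal R with hm
  constructor
  · -- injectivity
    intro a b hab
    have h0 : toCompletion R m (S11.GG R m M j) U (a - b) = 0 := by
      rw [map_sub, hab, sub_self]
    have h1 := S11.toCompletion_eq_zero R m M j hM' (hcomplete U).1 (a - b) h0
    exact sub_eq_zero.mp h1
  · -- surjectivity
    intro c
    have htmem : ∀ i, (extendSheafTrans R m R M i).app (op U)
        ((S11.phiE R m M hM' j (i + 1)).app (op U) (c.1 (i + 1))) =
        (S11.phiE R m M hM' j i).app (op U) (c.1 i) := by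
      intro i
      have hsq := CategoryTheory.ConcreteCategory.congr_hom
        (NatTrans.congr_app (S11.phiE_trans R m M hM' j i) (op U)) (c.1 (i + 1))
      have hsq' : (S11.phiE R m M hM' j i).app (op U)
          ((extendSheafTrans R m R (S11.GG R m M j) i).app (op U) (c.1 (i + 1))) =
          (extendSheafTrans R m R M i).app (op U)
            ((S11.phiE R m M hM' j (i + 1)).app (op U) (c.1 (i + 1))) := hsq
      rw [← hsq', c.2 i]
    obtain ⟨s, hs⟩ := (hcomplete U).2 ⟨fun i => (S11.phiE R m M hM' j i).app (op U) (c.1 i),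
      htmem⟩
    have hscomp : ∀ i, (CategoryTheory.toSheafify (JJ X)
        (extendPresheaf R R (R ⧸ m ^ (i + 1)) M)).app (op U)
        ((1 : R ⧸ m ^ (i + 1)) ⊗ₜ[R] s) =
        (S11.phiE R m M hM' j i).app (op U) (c.1 i) :=
      fun i => congrArg (fun z => z.1 i) hs
    have hloc : ∀ x : X, x ∈ U → ∃ (W : Opens X) (hWU : W ≤ U), x ∈ W ∧
        ∃ g, (S11.phi R m M hM' j).app (op W) g = M.map (homOfLE hWU).op s :=
      fun x hx => S11.lift_local R m M hM' j s (c.1 j) (hscomp j).symm hx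
    obtain ⟨g, hg⟩ := S11.glue_lift R m M hM' j s hloc
    refine ⟨g, ?_⟩
    apply Subtype.ext
    funext i
    have hdcomp : ∀ k, (extendSheafTrans R m R (S11.GG R m M j) k).app (op U)
        (c.1 (k + 1) - (toCompletion R m (S11.GG R m M j) U g).1 (k + 1)) =
        c.1 k - (toCompletion R m (S11.GG R m M j) U g).1 k := by
      intro k
      rw [map_sub, c.2 k, (toCompletion R m (S11.GG R m M j) U g).2 k]
    have hdphi : (S11.phiE R m M hM' j (i + j)).app (op U)
        (c.1 (i + j) - (toCompletion R m (S11.GG R m M j) U g).1 (i + j)) = 0 := by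
      rw [map_sub]
      have e1 : (S11.phiE R m M hM' j (i + j)).app (op U)
          ((toCompletion R m (S11.GG R m M j) U g).1 (i + j)) =
          (CategoryTheory.toSheafify (JJ X)
            (extendPresheaf R R (R ⧸ m ^ (i + j + 1)) M)).app (op U)
            ((1 : R ⧸ m ^ (i + j + 1)) ⊗ₜ[R] ((S11.phi R m M hM' j).app (op U) g)) :=
        S11.phiE_tmul R m M hM' j (i + j) g
      rw [e1, hg, ← hscomp (i + j)]; exact sub_self _
    have hdi : c.1 i - (toCompletion R m (S11.GG R m M j) U g).1 i = 0 :=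
      (S11.tau_family R m (S11.GG R m M j)
        (fun k => c.1 k - (toCompletion R m (S11.GG R m M j) U g).1 k)
        hdcomp i j).symm.trans (S11.kill R m M hM' j i _ hdphi)
    exact (sub_eq_zero.mp hdi).symm
end
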